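/- arXiv:2507.19106 — 6 statements merged into one kernel-verified Lean document; each statement's English description precedes it below -/
import Mathlib

section
/- Let $U \in C^1([-1,1])$ be real-valued with $U'(x) \geq m > 0$ for all $x \in [-1,1]$. Then for every exponent $q \geq 1$ there exists a constant $C > 0$ such that for all $\mu \in [-1,1]$ and all $\nu \in [U(-1), U(1)]$, $\big\| \log\big[(U-\nu)^2 + \mu^2\big] \big\|_{L^q(-1,1)} \leq C$. -/
/-!
Let `x₀` be the point with `U x₀ = ν`. Since `U' ≥ m`, the argument `s = (U x - ν)² + μ²` of the
logarithm satisfies `m² |x - x₀|² ≤ s ≤ (U 1 - U (-1))² + 1`. The elementary estimate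
`|log s| ≤ (s ^ ε + s ^ (-ε)) / ε`, taken with `ε = 1 / (4 q)`, gives
`|log s| ^ q ≲ s ^ (1/4) + s ^ (-1/4) ≲ 1 + |x - x₀| ^ (-1/2)`, and the integral of
`|x - x₀| ^ (-1/2)` over `(-1, 1)` is bounded by that of `|x| ^ (-1/2)` over `(-2, 2)`,
uniformly in `x₀`.
-/

open MeasureTheory Set Real

open scoped ENNReal

lemma abs_log_rpow_le {s p q : ℝ} (hs : 0 < s) (hp : 0 < p) (hq : 0 < q) :
    |log s| ^ q ≤ (q / p) ^ q * (s ^ p + s ^ (-p)) := by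
  have key : ∀ t > 0, 0 ≤ log t → log t ^ q ≤ (q / p) ^ q * t ^ p := by
    intro t ht hlog
    calc log t ^ q ≤ (t ^ (p / q) / (p / q)) ^ q :=
          rpow_le_rpow hlog (log_le_rpow_div ht.le (by positivity)) hq.le
      _ = (q / p) ^ q * t ^ p := by
          rw [div_eq_mul_inv, inv_div, mul_rpow (by positivity) (by positivity),
            ← rpow_mul ht.le, div_mul_cancel₀ _ hq.ne', mul_comm]
  have hp_term : 0 ≤ (q / p) ^ q * s ^ p := by positivity
  have hn_term : 0 ≤ (q / p) ^ q * s ^ (-p) := by positivity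
  rcases le_total 0 (log s) with h | h
  · rw [abs_of_nonneg h, mul_add]
    linarith [key s hs h]
  · have := key s⁻¹ (inv_pos.2 hs) (by rw [log_inv]; linarith)
    rw [log_inv, inv_rpow hs.le, ← rpow_neg hs.le] at this
    rw [abs_of_nonpos h, mul_add]
    linarith

theorem Convex.mul_sub_le_image_sub_of_le_hasDerivWithinAt {D : Set ℝ} (hD : Convex ℝ D)
    {f f' : ℝ → ℝ} {C : ℝ} (hf : ∀ x ∈ D, HasDerivWithinAt f (f' x) D x)
    (hf' : ∀ x ∈ D, C ≤ f' x) :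
    ∀ x ∈ D, ∀ y ∈ D, x ≤ y → C * (y - x) ≤ f y - f x := by
  have hderiv : ∀ x ∈ interior D, HasDerivAt f (f' x) x := fun x hx =>
    (hf x (interior_subset hx)).hasDerivAt (mem_interior_iff_mem_nhds.1 hx)
  exact hD.mul_sub_le_image_sub_of_le_deriv (fun x hx => (hf x hx).continuousWithinAt)
    (fun x hx => (hderiv x hx).differentiableAt.differentiableWithinAt)
    (fun x hx => (hderiv x hx).deriv ▸ hf' x (interior_subset hx))

theorem Convex.mul_abs_sub_le_abs_image_sub {D : Set ℝ} (hD : Convex ℝ D)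
    {f f' : ℝ → ℝ} {C : ℝ} (hC : 0 ≤ C) (hf : ∀ x ∈ D, HasDerivWithinAt f (f' x) D x)
    (hf' : ∀ x ∈ D, C ≤ f' x) :
    ∀ x ∈ D, ∀ y ∈ D, C * |y - x| ≤ |f y - f x| := by
  have growth := hD.mul_sub_le_image_sub_of_le_hasDerivWithinAt hf hf'
  intro x hx y hy
  rcases le_total x y with h | h
  · have := growth x hx y hy h
    rw [abs_of_nonneg (sub_nonneg.2 h), abs_of_nonneg (by nlinarith)]
    exact this
  · have := growth y hy x hx h
    rw [abs_of_nonpos (sub_nonpos.2 h), abs_of_nonpos (by nlinarith)]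
    linarith

lemma setLIntegral_Ioo_comp_sub {f : ℝ → ℝ≥0∞} (hf : Measurable f) (a b c : ℝ) :
    ∫⁻ x in Ioo a b, f (x - c) = ∫⁻ x in Ioo (a - c) (b - c), f x := by
  rw [← (measurePreserving_sub_right volume c).setLIntegral_comp_preimage measurableSet_Ioo hf,
    preimage_sub_const_Ioo, sub_add_cancel, sub_add_cancel]

lemma setLIntegral_Ioo_abs_rpow_neg_ne_top {α : ℝ} (hα : α < 1) (a b : ℝ) :
    ∫⁻ x in Ioo a b, ENNReal.ofReal (|x| ^ (-α)) ≠ ∞ := by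
  have hloc : LocallyIntegrable (fun x : ℝ => |x| ^ (-α)) volume :=
    locallyIntegrable_of_norm_le_rpow (C := 1) (by simp) (by simpa using hα)
      (Filter.Eventually.of_forall fun x => by simp [abs_rpow_of_nonneg (abs_nonneg x)])
      (continuous_abs.measurable.pow_const _).aestronglyMeasurable
  exact ((hloc.integrableOn_isCompact isCompact_Icc).mono_set Ioo_subset_Icc_self).lintegral_lt_top.ne

lemma exists_pos_le_ofReal_rpow {T : ℝ≥0∞} (hT : T ≠ ∞) {q : ℝ} (hq : 1 ≤ q) :
    ∃ C > 0, T ≤ ENNReal.ofReal (C ^ q) := by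
  refine ⟨T.toReal + 1, by positivity, ?_⟩
  calc T = ENNReal.ofReal T.toReal := (ENNReal.ofReal_toReal hT).symm
    _ ≤ ENNReal.ofReal ((T.toReal + 1) ^ q) := ENNReal.ofReal_le_ofReal
        ((le_add_of_nonneg_right zero_le_one).trans
          (self_le_rpow_of_one_le (le_add_of_nonneg_left ENNReal.toReal_nonneg) hq))

lemma abs_log_rpow_le_of_sq_le {s S m d q : ℝ} (hm : 0 < m) (hd : 0 < d) (hq : 0 < q)
    (hlow : (m * d) ^ 2 ≤ s) (hup : s ≤ S) :
    |log s| ^ q ≤ (4 * q) ^ q * S ^ (4⁻¹ : ℝ) + (4 * q) ^ q * m ^ (-2⁻¹ : ℝ) * d ^ (-2⁻¹ : ℝ) := by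
  have hs : 0 < s := lt_of_lt_of_le (by positivity) hlow
  have hlow' : s ^ (-4⁻¹ : ℝ) ≤ m ^ (-2⁻¹ : ℝ) * d ^ (-2⁻¹ : ℝ) :=
    calc s ^ (-4⁻¹ : ℝ) ≤ ((m * d) ^ 2) ^ (-4⁻¹ : ℝ) :=
          rpow_le_rpow_of_nonpos (by positivity) hlow (by norm_num)
      _ = (m * d) ^ (-2⁻¹ : ℝ) := by
          rw [← rpow_natCast, ← rpow_mul (by positivity)]
          norm_num
      _ = m ^ (-2⁻¹ : ℝ) * d ^ (-2⁻¹ : ℝ) := mul_rpow hm.le hd.le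
  calc |log s| ^ q ≤ (q / 4⁻¹) ^ q * (s ^ (4⁻¹ : ℝ) + s ^ (-4⁻¹ : ℝ)) :=
        abs_log_rpow_le hs (by norm_num) hq
    _ ≤ (4 * q) ^ q * (S ^ (4⁻¹ : ℝ) + m ^ (-2⁻¹ : ℝ) * d ^ (-2⁻¹ : ℝ)) := by
        rw [div_inv_eq_mul, mul_comm q]
        gcongr
    _ = _ := by ring

lemma setLIntegral_abs_log_rpow_le {f : ℝ → ℝ} {m S q x₀ : ℝ} (hm : 0 < m) (hq : 0 < q)
    (hx₀ : x₀ ∈ Icc (-1 : ℝ) 1) (hlow : ∀ x ∈ Ioo (-1 : ℝ) 1, (m * |x - x₀|) ^ 2 ≤ f x)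
    (hup : ∀ x ∈ Ioo (-1 : ℝ) 1, f x ≤ S) :
    ∫⁻ x in Ioo (-1 : ℝ) 1, ENNReal.ofReal (|log (f x)| ^ q) ≤
      ENNReal.ofReal ((4 * q) ^ q * S ^ (4⁻¹ : ℝ)) * 2 +
        ENNReal.ofReal ((4 * q) ^ q * m ^ (-2⁻¹ : ℝ)) *
          ∫⁻ x in Ioo (-2 : ℝ) 2, ENNReal.ofReal (|x| ^ (-2⁻¹ : ℝ)) := by
  set A := (4 * q) ^ q * S ^ (4⁻¹ : ℝ)
  set B := (4 * q) ^ q * m ^ (-2⁻¹ : ℝ)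
  have hpointwise : ∀ᵐ x ∂volume.restrict (Ioo (-1 : ℝ) 1), ENNReal.ofReal (|log (f x)| ^ q) ≤
      ENNReal.ofReal A + ENNReal.ofReal B * ENNReal.ofReal (|x - x₀| ^ (-2⁻¹ : ℝ)) := by
    filter_upwards [ae_restrict_mem measurableSet_Ioo,
      ae_restrict_of_ae (compl_mem_ae_iff.2 (measure_singleton x₀))] with x hx hne
    rw [← ENNReal.ofReal_mul (by positivity)]
    refine (ENNReal.ofReal_le_ofReal ?_).trans ENNReal.ofReal_add_le
    exact abs_log_rpow_le_of_sq_le hm (abs_pos.2 (sub_ne_zero.2 hne)) hq (hlow x hx) (hup x hx)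
  calc ∫⁻ x in Ioo (-1 : ℝ) 1, ENNReal.ofReal (|log (f x)| ^ q)
      ≤ ∫⁻ x in Ioo (-1 : ℝ) 1,
          ENNReal.ofReal A + ENNReal.ofReal B * ENNReal.ofReal (|x - x₀| ^ (-2⁻¹ : ℝ)) :=
        lintegral_mono_ae hpointwise
    _ = ENNReal.ofReal A * 2 + ENNReal.ofReal B *
          ∫⁻ x in Ioo (-1 - x₀) (1 - x₀), ENNReal.ofReal (|x| ^ (-2⁻¹ : ℝ)) := by
        rw [lintegral_add_left measurable_const, setLIntegral_const, Real.volume_Ioo,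
          lintegral_const_mul' _ _ ENNReal.ofReal_ne_top,
          setLIntegral_Ioo_comp_sub (f := fun x => ENNReal.ofReal (|x| ^ (-2⁻¹ : ℝ)))
            (continuous_abs.measurable.pow_const _).ennreal_ofReal]
        norm_num
    _ ≤ _ := by
        gcongr <;> linarith [hx₀.1, hx₀.2]

theorem stmt2_general (U U' : ℝ → ℝ) (m : ℝ) (hm : 0 < m)
    (hU : ∀ x ∈ Set.Icc (-1:ℝ) 1, HasDerivWithinAt U (U' x) (Set.Icc (-1:ℝ) 1) x)
    (hU'm : ∀ x ∈ Set.Icc (-1:ℝ) 1, m ≤ U' x)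
    (q : ℝ) (hq : 1 ≤ q) :
    ∃ C > 0, ∀ μ ∈ Set.Icc (-1:ℝ) 1, ∀ ν ∈ Set.Icc (U (-1)) (U 1),
      ∫⁻ x in Set.Ioo (-1:ℝ) 1,
          ENNReal.ofReal (|Real.log ((U x - ν) ^ 2 + μ ^ 2)| ^ q)
        ≤ ENNReal.ofReal (C ^ q) := by
  have hgrowth := (convex_Icc (-1 : ℝ) 1).mul_sub_le_image_sub_of_le_hasDerivWithinAt hU hU'm
  have hlip := (convex_Icc (-1 : ℝ) 1).mul_abs_sub_le_abs_image_sub hm.le hU hU'm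
  have hrange : ∀ x ∈ Icc (-1 : ℝ) 1, U (-1) ≤ U x ∧ U x ≤ U 1 := fun x hx =>
    ⟨by nlinarith [hgrowth (-1) (by norm_num) x hx hx.1, mul_nonneg hm.le (sub_nonneg.2 hx.1)],
      by nlinarith [hgrowth x hx 1 (by norm_num) hx.2, mul_nonneg hm.le (sub_nonneg.2 hx.2)]⟩
  obtain ⟨C, hC, hbound⟩ := exists_pos_le_ofReal_rpow (q := q)
    (T := ENNReal.ofReal ((4 * q) ^ q * ((U 1 - U (-1)) ^ 2 + 1) ^ (4⁻¹ : ℝ)) * 2 +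
      ENNReal.ofReal ((4 * q) ^ q * m ^ (-2⁻¹ : ℝ)) *
        ∫⁻ x in Ioo (-2 : ℝ) 2, ENNReal.ofReal (|x| ^ (-2⁻¹ : ℝ)))
    (by finiteness [setLIntegral_Ioo_abs_rpow_neg_ne_top (α := 2⁻¹) (by norm_num) (-2) 2]) hq
  refine ⟨C, hC, fun μ hμ ν hν => ?_⟩
  obtain ⟨x₀, hx₀, rfl⟩ :=
    intermediate_value_Icc (by norm_num) (fun x hx => (hU x hx).continuousWithinAt) hν
  refine le_trans (setLIntegral_abs_log_rpow_le hm (by linarith) hx₀ (fun x hx => ?_)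
    (fun x hx => ?_)) hbound
  · calc (m * |x - x₀|) ^ 2 ≤ |U x - U x₀| ^ 2 :=
          pow_le_pow_left₀ (by positivity) (hlip x₀ hx₀ x (Ioo_subset_Icc_self hx)) 2
      _ ≤ (U x - U x₀) ^ 2 + μ ^ 2 := by rw [sq_abs]; linarith [sq_nonneg μ]
  · have hx' := hrange x (Ioo_subset_Icc_self hx)
    have hx₀' := hrange x₀ hx₀
    have : (U x - U x₀) ^ 2 ≤ (U 1 - U (-1)) ^ 2 := sq_le_sq' (by linarith) (by linarith)
    nlinarith [hμ.1, hμ.2]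

/-- for `U ∈ C¹([-1,1])` with `U' ≥ m > 0` and any `q ≥ 1`, the
`L^q(-1,1)` norm of `log[(U-ν)² + μ²]` is bounded uniformly in `μ ∈ [-1,1]`
and `ν ∈ [U(-1), U(1)]`. -/
theorem stmt2 (U U' : ℝ → ℝ) (m : ℝ) (hm : 0 < m)
    (hU : ∀ x ∈ Set.Icc (-1:ℝ) 1, HasDerivWithinAt U (U' x) (Set.Icc (-1:ℝ) 1) x)
    (hU'c : ContinuousOn U' (Set.Icc (-1:ℝ) 1))
    (hU'm : ∀ x ∈ Set.Icc (-1:ℝ) 1, m ≤ U' x)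
    (q : ℝ) (hq : 1 ≤ q) :
    ∃ C > 0, ∀ μ ∈ Set.Icc (-1:ℝ) 1, ∀ ν ∈ Set.Icc (U (-1)) (U 1),
      ∫⁻ x in Set.Ioo (-1:ℝ) 1,
          ENNReal.ofReal (|Real.log ((U x - ν) ^ 2 + μ ^ 2)| ^ q)
        ≤ ENNReal.ofReal (C ^ q) :=
  stmt2_general U U' m hm hU hU'm q hq
end

section
/- Let $U \in C^1([-1,1])$ be real-valued with $U' \geq m > 0$ on $[-1,1]$, and let $q > 1$. Then there exists $C_q > 0$ such that for all $\lambda = \mu + i\nu$ with $0 < |\mu| \leq 1$ and $\nu \in \mathbb{R}$, $\Big\| \frac{1}{U + i\lambda} \Big\|_{L^q(-1,1)} \leq C_q |\mu|^{-1 + 1/q}$. -/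
/-!
Substituting `y = U x` and using `U' ≥ m` bounds `∫₋₁¹ ((U - ν)² + μ²)^(-q/2)` by `m⁻¹` times the
integral of `((y - ν)² + μ²)^(-q/2)` over the whole line. Rescaling `y - ν = |μ| t` turns the latter
into `|μ|^(1-q) ∫ (1 + t²)^(-q/2)`, which is finite because `q > 1`; taking `q`-th roots gives the
claim.
-/

open MeasureTheory Set
open scoped Interval

lemma rpow_neg_sq_add_sq_eq (q ν : ℝ) {μ : ℝ} (hμ : μ ≠ 0) (y : ℝ) :
    ((y - ν) ^ 2 + μ ^ 2) ^ (-(q / 2))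
      = |μ| ^ (-q) * (1 + ((y - ν) / |μ|) ^ 2) ^ (-(q / 2)) := by
  have hμ' : 0 < |μ| := abs_pos.mpr hμ
  have hsplit : (y - ν) ^ 2 + μ ^ 2 = |μ| ^ (2 : ℝ) * (1 + ((y - ν) / |μ|) ^ 2) := by
    rw [Real.rpow_two, div_pow, sq_abs]
    field_simp
    ring
  rw [hsplit, Real.mul_rpow (by positivity) (by positivity), ← Real.rpow_mul hμ'.le]
  congr 2
  ring

lemma integral_rpow_neg_sq_add_sq (q ν : ℝ) {μ : ℝ} (hμ : μ ≠ 0) :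
    ∫ y, ((y - ν) ^ 2 + μ ^ 2) ^ (-(q / 2))
      = |μ| ^ (1 - q) * ∫ t, (1 + t ^ 2) ^ (-(q / 2)) := by
  have hμ' : 0 < |μ| := abs_pos.mpr hμ
  simp_rw [rpow_neg_sq_add_sq_eq q ν hμ, integral_const_mul,
    integral_sub_right_eq_self (fun y => (1 + (y / |μ|) ^ 2) ^ (-(q / 2))),
    Measure.integral_comp_div (fun t => (1 + t ^ 2) ^ (-(q / 2))), abs_abs, smul_eq_mul,
    ← mul_assoc, ← Real.rpow_add_one hμ'.ne']
  ring_nf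

lemma integrable_rpow_neg_sq_add_sq {q : ℝ} (hq : 1 < q) (ν : ℝ) {μ : ℝ} (hμ : μ ≠ 0) :
    Integrable fun y : ℝ => ((y - ν) ^ 2 + μ ^ 2) ^ (-(q / 2)) := by
  have hbracket : Integrable fun t : ℝ => (1 + t ^ 2) ^ (-(q / 2)) := by
    simpa [sq_abs, neg_div] using
      integrable_rpow_neg_one_add_norm_sq (E := ℝ) (μ := volume) (r := q) (by simpa using hq)
  simp_rw [rpow_neg_sq_add_sq_eq q ν hμ]
  exact (((hbracket.comp_div (abs_ne_zero.mpr hμ)).comp_sub_right ν).const_mul _)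

lemma intervalIntegral_le_integral_of_nonneg {g : ℝ → ℝ} (hg : Integrable g) (hg0 : 0 ≤ g)
    (a b : ℝ) : ∫ y in a..b, g y ≤ ∫ y, g y :=
  calc ∫ y in a..b, g y ≤ ‖∫ y in a..b, g y‖ := Real.le_norm_self _
    _ ≤ ∫ y in Ι a b, ‖g y‖ := intervalIntegral.norm_integral_le_integral_norm_uIoc
    _ = ∫ y in Ι a b, g y := by simp_rw [Real.norm_of_nonneg (hg0 _)]
    _ ≤ ∫ y, g y := setIntegral_le_integral hg (.of_forall hg0)

/-- No integrability of `U'` is needed: with `G` a primitive of `g`, the right derivative of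
`G ∘ U` dominates `m * g ∘ U`. -/
lemma mul_integral_comp_le_integral_of_le_deriv {a b m : ℝ} {U U' g : ℝ → ℝ} (hab : a ≤ b)
    (hU : ∀ x ∈ Icc a b, HasDerivWithinAt U (U' x) (Icc a b) x)
    (hU' : ∀ x ∈ Ioo a b, m ≤ U' x) (hg : Continuous g) (hg0 : 0 ≤ g) :
    m * ∫ x in a..b, g (U x) ≤ ∫ y in U a..U b, g y := by
  set G : ℝ → ℝ := fun u => ∫ y in U a..u, g y
  have hG : ∀ u, HasDerivAt G (g u) u := fun u =>
    intervalIntegral.integral_hasDerivAt_right (hg.intervalIntegrable _ _)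
      (hg.stronglyMeasurableAtFilter _ _) hg.continuousAt
  have hUc : ContinuousOn U (Icc a b) := fun x hx => (hU x hx).continuousWithinAt
  have hgU : ContinuousOn (fun x => g (U x)) (Icc a b) := hg.comp_continuousOn hUc
  rw [← intervalIntegral.integral_const_mul]
  have hFTC := intervalIntegral.integral_le_sub_of_hasDeriv_right_of_le (g := G ∘ U)
    (φ := fun x => m * g (U x)) hab
    ((continuous_iff_continuousAt.mpr fun u => (hG u).continuousAt).comp_continuousOn hUc)
    (fun x hx => ((hG (U x)).comp x ((hU x (Ioo_subset_Icc_self hx)).hasDerivAt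
      (Icc_mem_nhds hx.1 hx.2))).hasDerivWithinAt)
    ((continuousOn_const.mul hgU).integrableOn_compact isCompact_Icc)
    (fun x hx => by
      rw [mul_comm (g (U x))]
      exact mul_le_mul_of_nonneg_right (hU' x hx) (hg0 (U x)))
  simpa [G] using hFTC

theorem stmt4_general (U U' : ℝ → ℝ) (m : ℝ) (hm : 0 < m)
    (hU : ∀ x ∈ Set.Icc (-1:ℝ) 1, HasDerivWithinAt U (U' x) (Set.Icc (-1:ℝ) 1) x)
    (hU'm : ∀ x ∈ Set.Icc (-1:ℝ) 1, m ≤ U' x)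
    (q : ℝ) (hq : 1 < q) :
    ∃ C > 0, ∀ μ ν : ℝ, 0 < |μ| → |μ| ≤ 1 →
      (∫ x in (-1:ℝ)..1, ((U x - ν) ^ 2 + μ ^ 2) ^ (-(q / 2))) ^ (1 / q)
        ≤ C * |μ| ^ (-1 + 1 / q) := by
  set I := ∫ t : ℝ, (1 + t ^ 2) ^ (-(q / 2))
  have hI : 0 ≤ I := integral_nonneg fun t => by positivity
  refine ⟨(m⁻¹ * I) ^ (1 / q) + 1, by positivity, fun μ ν hμ _ => ?_⟩
  have hμ0 : μ ≠ 0 := abs_pos.mp hμ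
  set g : ℝ → ℝ := fun y => ((y - ν) ^ 2 + μ ^ 2) ^ (-(q / 2))
  have hg : Continuous g :=
    (by fun_prop : Continuous fun y => (y - ν) ^ 2 + μ ^ 2).rpow_const
      fun y => Or.inl (by positivity)
  have hg0 : 0 ≤ g := fun y => by positivity
  have hJ : ∫ x in (-1:ℝ)..1, g (U x) ≤ m⁻¹ * I * |μ| ^ (1 - q) := by
    have hcomp := mul_integral_comp_le_integral_of_le_deriv (by norm_num) hU
      (fun x hx => hU'm x (Ioo_subset_Icc_self hx)) hg hg0
    have hline := intervalIntegral_le_integral_of_nonneg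
      (integrable_rpow_neg_sq_add_sq hq ν hμ0) hg0 (U (-1)) (U 1)
    rw [integral_rpow_neg_sq_add_sq q ν hμ0] at hline
    rw [mul_assoc, le_inv_mul_iff₀ hm, mul_comm I]
    exact hcomp.trans hline
  have hJ0 : 0 ≤ ∫ x in (-1:ℝ)..1, g (U x) :=
    intervalIntegral.integral_nonneg (by norm_num) fun x _ => hg0 (U x)
  calc (∫ x in (-1:ℝ)..1, g (U x)) ^ (1 / q)
      ≤ (m⁻¹ * I * |μ| ^ (1 - q)) ^ (1 / q) := Real.rpow_le_rpow hJ0 hJ (by positivity)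
    _ = (m⁻¹ * I) ^ (1 / q) * |μ| ^ (-1 + 1 / q) := by
      rw [Real.mul_rpow (by positivity) (by positivity), ← Real.rpow_mul (abs_nonneg μ)]
      congr 2
      field_simp
      ring
    _ ≤ ((m⁻¹ * I) ^ (1 / q) + 1) * |μ| ^ (-1 + 1 / q) := by gcongr; linarith

/-- for `U ∈ C¹([-1,1])` with `U' ≥ m > 0` and `q > 1`, there is
`C_q > 0` such that for all `λ = μ + iν` with `0 < |μ| ≤ 1` and `ν ∈ ℝ`,
`‖1/(U+iλ)‖_{L^q(-1,1)} ≤ C_q |μ|^{-1+1/q}`; here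
`|U(x)+iλ|^q = ((U(x)-ν)² + μ²)^{q/2}`. -/
theorem stmt4 (U U' : ℝ → ℝ) (m : ℝ) (hm : 0 < m)
    (hU : ∀ x ∈ Set.Icc (-1:ℝ) 1, HasDerivWithinAt U (U' x) (Set.Icc (-1:ℝ) 1) x)
    (hU'c : ContinuousOn U' (Set.Icc (-1:ℝ) 1))
    (hU'm : ∀ x ∈ Set.Icc (-1:ℝ) 1, m ≤ U' x)
    (q : ℝ) (hq : 1 < q) :
    ∃ C > 0, ∀ μ ν : ℝ, 0 < |μ| → |μ| ≤ 1 →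
      (∫ x in (-1:ℝ)..1, ((U x - ν) ^ 2 + μ ^ 2) ^ (-(q / 2))) ^ (1 / q)
        ≤ C * |μ| ^ (-1 + 1 / q) :=
  stmt4_general U U' m hm hU hU'm q hq
end

section
/- Let $U \in C^1([-1,1])$ be real-valued with $U' \geq m > 0$ on $[-1,1]$. Then there exists $C > 0$ such that for all $\lambda = \mu + i\nu$ with $0 < |\mu| \leq 1/2$ and $\nu \in \mathbb{R}$, $\Big\| \frac{1}{U + i\lambda} \Big\|_{L^1(-1,1)} \leq C \log(|\mu|^{-1})$. -/
/-!
Since `U' ≥ m`, the substitution `t = U x - ν` bounds `m` times the integral by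
`∫ dt / √(t² + μ²)` over an interval of length `L = U 1 - U (-1)`. That integral is a difference
of values of `arsinh (t / |μ|)`, and an increment `h` of `arsinh` costs at most `2 log (1 + 2h)`,
which for `h = L / |μ|` is `O(log |μ|⁻¹)` as soon as `|μ| ≤ 1/2`.
-/

open MeasureTheory Set Real

namespace Real

lemma arsinh_add_sub_arsinh_le_log_of_nonneg {q h : ℝ} (hq : 0 ≤ q) (hh : 0 ≤ h) :
    arsinh (q + h) - arsinh q ≤ log (1 + 2 * h) := by
  have hs : √(1 + q ^ 2) ^ 2 = 1 + q ^ 2 := sq_sqrt (by positivity)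
  have hpos : 1 ≤ q + √(1 + q ^ 2) := by nlinarith [sqrt_nonneg (1 + q ^ 2)]
  have hsqrt : √(1 + (q + h) ^ 2) ≤ √(1 + q ^ 2) + h := by
    rw [sqrt_le_left (by positivity)]
    nlinarith
  -- `q + h + √(1 + (q + h)²) ≤ (q + √(1 + q²)) + 2h ≤ (1 + 2h) (q + √(1 + q²))`
  rw [arsinh, arsinh, ← log_div (by positivity) (by positivity)]
  refine log_le_log (by positivity) ?_
  rw [div_le_iff₀ (by positivity)]
  nlinarith

lemma arsinh_add_sub_arsinh_le (q : ℝ) {h : ℝ} (hh : 0 ≤ h) :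
    arsinh (q + h) - arsinh q ≤ 2 * log (1 + 2 * h) := by
  have hlog : 0 ≤ log (1 + 2 * h) := log_nonneg (by linarith)
  have harsinh : arsinh h ≤ log (1 + 2 * h) := by
    simpa using arsinh_add_sub_arsinh_le_log_of_nonneg le_rfl hh
  rcases le_total 0 q with hq | hq
  · linarith [arsinh_add_sub_arsinh_le_log_of_nonneg hq hh]
  rcases le_total (q + h) 0 with hqh | hqh
  · have := arsinh_add_sub_arsinh_le_log_of_nonneg (q := -(q + h)) (by linarith) hh
    rw [show -(q + h) + h = -q by ring, arsinh_neg, arsinh_neg] at this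
    linarith
  · have h₁ : arsinh (q + h) ≤ arsinh h := arsinh_le_arsinh.mpr (by linarith)
    have h₂ : arsinh (-q) ≤ arsinh h := arsinh_le_arsinh.mpr (by linarith)
    rw [arsinh_neg] at h₂
    linarith

lemma log_one_add_div_le_mul_log_inv {L c : ℝ} (hL : 0 ≤ L) (hc : 0 < c) (hc₂ : c ≤ 1 / 2) :
    log (1 + L / c) ≤ (1 + log (1 + L) / log 2) * log c⁻¹ := by
  have hlog2 : 0 < log 2 := log_pos one_lt_two
  have hlog_inv : log 2 ≤ log c⁻¹ := log_le_log two_pos (by rw [le_inv_comm₀ two_pos hc]; linarith)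
  have hK : log (1 + L) ≤ log (1 + L) / log 2 * log c⁻¹ := by
    rw [div_mul_eq_mul_div, le_div_iff₀ hlog2]
    exact mul_le_mul_of_nonneg_left hlog_inv (log_nonneg (by linarith))
  calc log (1 + L / c) ≤ log ((1 + L) / c) :=
        log_le_log (by positivity) (by rw [add_div]; gcongr; rw [le_div_iff₀ hc]; linarith)
    _ = log (1 + L) + log c⁻¹ := by rw [div_eq_mul_inv, log_mul (by positivity) (by positivity)]
    _ ≤ (1 + log (1 + L) / log 2) * log c⁻¹ := by linarith

end Real

lemma continuous_inv_sqrt_sq_add_sq {c : ℝ} (hc : c ≠ 0) :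
    Continuous fun t : ℝ => 1 / √(t ^ 2 + c ^ 2) :=
  continuous_const.div (by fun_prop) fun t => (sqrt_pos.mpr (by positivity)).ne'

lemma integral_inv_sqrt_sq_add_sq {c : ℝ} (hc : 0 < c) (a b : ℝ) :
    ∫ t in a..b, 1 / √(t ^ 2 + c ^ 2) = arsinh (b / c) - arsinh (a / c) := by
  refine intervalIntegral.integral_eq_sub_of_hasDerivAt (f := fun t => arsinh (t / c)) (fun t _ => ?_)
    ((continuous_inv_sqrt_sq_add_sq hc.ne').intervalIntegrable a b)
  have hsqrt : √(1 + (t / c) ^ 2) = √(t ^ 2 + c ^ 2) / c := by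
    rw [show 1 + (t / c) ^ 2 = (t ^ 2 + c ^ 2) / c ^ 2 by field_simp; ring,
      sqrt_div (by positivity), sqrt_sq hc.le]
  have hne : √(t ^ 2 + c ^ 2) ≠ 0 := (sqrt_pos.mpr (by positivity)).ne'
  refine ((hasDerivAt_arsinh (t / c)).comp t ((hasDerivAt_id t).div_const c)).congr_deriv ?_
  rw [hsqrt]
  field_simp

lemma integral_inv_sqrt_sq_add_sq_le {c a b : ℝ} (hc : 0 < c) (hab : a ≤ b) :
    ∫ t in a..b, 1 / √(t ^ 2 + c ^ 2) ≤ 2 * log (1 + 2 * (b - a) / c) := by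
  rw [integral_inv_sqrt_sq_add_sq hc, show b / c = a / c + (b - a) / c by ring]
  simpa only [mul_div_assoc] using arsinh_add_sub_arsinh_le _ (div_nonneg (by linarith) hc.le)

section ChangeOfVariables

variable {U U' : ℝ → ℝ} {a b m : ℝ}

lemma hasDerivAt_of_hasDerivWithinAt_Icc
    (hU : ∀ x ∈ Icc a b, HasDerivWithinAt U (U' x) (Icc a b) x) {x : ℝ} (hx : x ∈ Ioo a b) :
    HasDerivAt U (U' x) x :=
  (hU x (Ioo_subset_Icc_self hx)).hasDerivAt (Icc_mem_nhds hx.1 hx.2)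

lemma monotoneOn_Icc_of_hasDerivWithinAt_nonneg
    (hU : ∀ x ∈ Icc a b, HasDerivWithinAt U (U' x) (Icc a b) x)
    (hU'₀ : ∀ x ∈ Icc a b, 0 ≤ U' x) : MonotoneOn U (Icc a b) := by
  refine monotoneOn_of_hasDerivWithinAt_nonneg (f' := U') (convex_Icc a b)
    (fun x hx => (hU x hx).continuousWithinAt) (fun x hx => ?_) (fun x hx => ?_) <;>
    rw [interior_Icc] at hx
  · exact (hasDerivAt_of_hasDerivWithinAt_Icc hU hx).hasDerivWithinAt
  · exact hU'₀ x (Ioo_subset_Icc_self hx)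

lemma mul_integral_comp_le_integral (hab : a ≤ b)
    (hU : ∀ x ∈ Icc a b, HasDerivWithinAt U (U' x) (Icc a b) x)
    (hU'c : ContinuousOn U' (Icc a b)) (hU'm : ∀ x ∈ Icc a b, m ≤ U' x)
    {g : ℝ → ℝ} (hg : Continuous g) (hg₀ : ∀ y, 0 ≤ g y) :
    m * ∫ x in a..b, g (U x) ≤ ∫ y in U a..U b, g y := by
  have hUc : ContinuousOn U (Icc a b) := fun x hx => (hU x hx).continuousWithinAt
  have hgU : ContinuousOn (fun x => g (U x)) (Icc a b) := hg.comp_continuousOn hUc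
  rw [← intervalIntegral.integral_const_mul]
  calc ∫ x in a..b, m * g (U x) ≤ ∫ x in a..b, U' x * g (U x) := by
        refine intervalIntegral.integral_mono_on hab ?_ ?_
          fun x hx => mul_le_mul_of_nonneg_right (hU'm x hx) (hg₀ _)
        · exact (continuousOn_const.mul hgU).intervalIntegrable_of_Icc hab
        · exact (hU'c.mul hgU).intervalIntegrable_of_Icc hab
    _ = ∫ y in U a..U b, g y := by
        refine intervalIntegral.integral_deriv_smul_comp'' (uIcc_of_le hab ▸ hUc)
          (fun x hx => ?_) (uIcc_of_le hab ▸ hU'c) hg.continuousOn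
        rw [min_eq_left hab, max_eq_right hab] at hx
        exact (hasDerivAt_of_hasDerivWithinAt_Icc hU hx).hasDerivWithinAt

end ChangeOfVariables

/-- for `U ∈ C¹([-1,1])` with `U' ≥ m > 0`, there is `C > 0` such
that for all `λ = μ + iν` with `0 < |μ| ≤ 1/2` and `ν ∈ ℝ`,
`‖1/(U+iλ)‖_{L¹(-1,1)} ≤ C log(|μ|⁻¹)`, where `|U(x)+iλ| = √((U(x)-ν)² + μ²)`. -/
theorem stmt5 (U U' : ℝ → ℝ) (m : ℝ) (hm : 0 < m)
    (hU : ∀ x ∈ Set.Icc (-1:ℝ) 1, HasDerivWithinAt U (U' x) (Set.Icc (-1:ℝ) 1) x)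
    (hU'c : ContinuousOn U' (Set.Icc (-1:ℝ) 1))
    (hU'm : ∀ x ∈ Set.Icc (-1:ℝ) 1, m ≤ U' x) :
    ∃ C > 0, ∀ μ ν : ℝ, 0 < |μ| → |μ| ≤ 1 / 2 →
      ∫ x in (-1:ℝ)..1, 1 / Real.sqrt ((U x - ν) ^ 2 + μ ^ 2)
        ≤ C * Real.log (|μ|⁻¹) := by
  have hU_le : U (-1) ≤ U 1 :=
    monotoneOn_Icc_of_hasDerivWithinAt_nonneg hU (fun x hx => hm.le.trans (hU'm x hx))
      (by norm_num) (by norm_num) (by norm_num)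
  set L := U 1 - U (-1)
  have hK : 0 ≤ log (1 + 2 * L) := log_nonneg (by linarith)
  refine ⟨2 / m * (1 + log (1 + 2 * L) / log 2), by positivity, fun μ ν hμ hμ₂ => ?_⟩
  set c := |μ|
  have hsubst := mul_integral_comp_le_integral (by norm_num) hU hU'c hU'm
    (g := fun y => 1 / √((y - ν) ^ 2 + c ^ 2))
    ((continuous_inv_sqrt_sq_add_sq hμ.ne').comp (continuous_sub_right ν)) fun _ => by positivity
  rw [intervalIntegral.integral_comp_sub_right (fun t => 1 / √(t ^ 2 + c ^ 2))] at hsubst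
  have hint := integral_inv_sqrt_sq_add_sq_le hμ (show U (-1) - ν ≤ U 1 - ν by linarith)
  rw [show U 1 - ν - (U (-1) - ν) = L by ring] at hint
  have hlog := log_one_add_div_le_mul_log_inv (L := 2 * L) (by linarith) hμ hμ₂
  simp_rw [← sq_abs μ]
  calc _ ≤ (∫ t in U (-1) - ν..U 1 - ν, 1 / √(t ^ 2 + c ^ 2)) / m := (le_div_iff₀' hm).mpr hsubst
    _ ≤ 2 * ((1 + log (1 + 2 * L) / log 2) * log c⁻¹) / m := by gcongr; linarith
    _ = _ := by ring
end

section
/- Let $U \in C^1([-1,1])$ be real-valued with $U' \geq m > 0$ and let $\nu_0 \in [U(-1), U(1)]$. Then there exists $C > 0$ such that for all $\lambda = \mu + i\nu$ with $0 < |\lambda - i\nu_0| \leq 1/2$ and $\mu \neq 0$, $\Big\| \log \frac{U + i\lambda}{U - \nu_0} \Big\|_{L^2(-1,1)} \leq C |\lambda - i\nu_0|^{1/2} \log\big(|\lambda - i\nu_0|^{-1}\big)$. -/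
/-!
Write `ζ = λ - iν₀` and substitute `y = U x - ν₀`: since `U' ≥ m`, this costs a factor
`1/m` and leaves the integral of `‖log ((y + iζ) / y)‖²` over the whole line. Where
`|y| > 2‖ζ‖` the quotient lies within `‖ζ‖/|y| ≤ 1/2` of `1`, so the integrand is
`O(‖ζ‖²/y²)` and contributes `O(‖ζ‖)`. On `|y| ≤ 2‖ζ‖` the argument is at most `π` and
the modulus contributes `O(log²|y - Im ζ| + log²|y|)`, whose integrals over an interval of
length `O(‖ζ‖)` are `O(‖ζ‖ log²‖ζ‖)`, because `log² u ≤ 16 u^(-1/2)` on `(0, 1]`.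
-/

open MeasureTheory Set Real
open scoped ENNReal

theorem setLIntegral_comp_le_of_le_abs_deriv {s t : Set ℝ} {f f' : ℝ → ℝ} {m : ℝ}
    (hm : 0 < m) (hs : MeasurableSet s) (hf : ∀ x ∈ s, HasDerivWithinAt f (f' x) s x)
    (hinj : InjOn f s) (hf' : ∀ x ∈ s, m ≤ |f' x|) (hst : MapsTo f s t) (g : ℝ → ℝ≥0∞) :
    ∫⁻ x in s, g (f x) ≤ (ENNReal.ofReal m)⁻¹ * ∫⁻ y in t, g y := by
  have hm₀ : ENNReal.ofReal m ≠ 0 := by simpa using hm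
  calc ∫⁻ x in s, g (f x)
      = (ENNReal.ofReal m)⁻¹ * ∫⁻ x in s, ENNReal.ofReal m * g (f x) := by
        rw [lintegral_const_mul' _ _ ENNReal.ofReal_ne_top, ← mul_assoc,
          ENNReal.inv_mul_cancel hm₀ ENNReal.ofReal_ne_top, one_mul]
    _ ≤ (ENNReal.ofReal m)⁻¹ * ∫⁻ x in s, ENNReal.ofReal |f' x| * g (f x) := by
        gcongr 1
        exact setLIntegral_mono' hs fun x hx => by gcongr; exact hf' x hx
    _ = (ENNReal.ofReal m)⁻¹ * ∫⁻ y in f '' s, g y := by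
        rw [lintegral_image_eq_lintegral_abs_deriv_mul hs hf hinj]
    _ ≤ (ENNReal.ofReal m)⁻¹ * ∫⁻ y in t, g y := by
        gcongr 1
        exact lintegral_mono_set hst.image_subset

theorem setLIntegral_comp_abs_le {s t : Set ℝ} (hs : MeasurableSet s)
    (hst : MapsTo (fun y => |y|) s t) (g : ℝ → ℝ≥0∞) :
    ∫⁻ y in s, g |y| ≤ 2 * ∫⁻ y in t, g y := by
  have hneg : ∫⁻ y in s ∩ Iic 0, g |y| ≤ ∫⁻ y in t, g y := by
    have hs' : MeasurableSet (s ∩ Iic 0) := hs.inter measurableSet_Iic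
    calc ∫⁻ y in s ∩ Iic 0, g |y| = ∫⁻ y in s ∩ Iic 0, g (-y) :=
          setLIntegral_congr_fun hs' fun y hy => by rw [abs_of_nonpos (mem_Iic.mp hy.2)]
      _ ≤ (ENNReal.ofReal 1)⁻¹ * ∫⁻ y in t, g y :=
          setLIntegral_comp_le_of_le_abs_deriv one_pos hs'
            (fun y _ => (hasDerivAt_neg y).hasDerivWithinAt) neg_injective.injOn
            (fun y _ => by simp)
            (fun y hy => by simpa [abs_of_nonpos (mem_Iic.mp hy.2)] using hst hy.1) g
      _ = ∫⁻ y in t, g y := by simp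
  have hpos : ∫⁻ y in s ∩ Ici 0, g |y| ≤ ∫⁻ y in t, g y := by
    calc ∫⁻ y in s ∩ Ici 0, g |y| = ∫⁻ y in s ∩ Ici 0, g y :=
          setLIntegral_congr_fun (hs.inter measurableSet_Ici) fun y hy => by
            rw [abs_of_nonneg (mem_Ici.mp hy.2)]
      _ ≤ ∫⁻ y in t, g y :=
          lintegral_mono_set fun y hy => by
            simpa [abs_of_nonneg (mem_Ici.mp hy.2)] using hst hy.1
  calc ∫⁻ y in s, g |y| ≤ ∫⁻ y in s ∩ Iic 0 ∪ s ∩ Ici 0, g |y| :=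
        lintegral_mono_set fun y hy => by
          rcases le_total y 0 with h | h
          exacts [Or.inl ⟨hy, h⟩, Or.inr ⟨hy, h⟩]
    _ ≤ (∫⁻ y in s ∩ Iic 0, g |y|) + ∫⁻ y in s ∩ Ici 0, g |y| :=
        lintegral_union_le _ _ _
    _ ≤ 2 * ∫⁻ y in t, g y := by rw [two_mul]; exact add_le_add hneg hpos

theorem setLIntegral_Ioi_inv_sq {a : ℝ} (ha : 0 < a) :
    ∫⁻ y in Ioi a, ENNReal.ofReal ((y ^ 2)⁻¹) = ENNReal.ofReal a⁻¹ := by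
  have hrpow : ∀ y ∈ Ioi a, ENNReal.ofReal ((y ^ 2)⁻¹) = ENNReal.ofReal (y ^ (-2 : ℝ)) :=
    fun y hy => by
      rw [Real.rpow_neg (ha.trans hy).le, Real.rpow_two]
  rw [setLIntegral_congr_fun measurableSet_Ioi hrpow, ← ofReal_integral_eq_lintegral_ofReal
    (integrableOn_Ioi_rpow_of_lt (by norm_num) ha)
    ((ae_restrict_iff' measurableSet_Ioi).mpr (ae_of_all _ fun y hy =>
      Real.rpow_nonneg (ha.trans hy).le _)),
    integral_Ioi_rpow_of_lt (by norm_num) ha]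
  norm_num [Real.rpow_neg_one]

theorem setLIntegral_compl_Icc_inv_sq_le {a : ℝ} (ha : 0 < a) :
    ∫⁻ y in (Icc (-a) a)ᶜ, ENNReal.ofReal ((y ^ 2)⁻¹) ≤ ENNReal.ofReal (2 / a) := by
  have h := setLIntegral_comp_abs_le measurableSet_Icc.compl (t := Ioi a)
    (fun y hy => not_le.mp fun h => hy (abs_le.mp h)) fun u => ENNReal.ofReal ((u ^ 2)⁻¹)
  simp only [sq_abs] at h
  refine h.trans_eq ?_
  rw [setLIntegral_Ioi_inv_sq ha, div_eq_mul_inv, ENNReal.ofReal_mul zero_le_two]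
  simp

theorem setLIntegral_Icc_rpow_neg_half {b : ℝ} (hb : 0 ≤ b) :
    ∫⁻ u in Icc 0 b, ENNReal.ofReal (u ^ (-(1 / 2) : ℝ)) = ENNReal.ofReal (2 * √b) := by
  have hint : IntegrableOn (fun u : ℝ => u ^ (-(1 / 2) : ℝ)) (Icc 0 b) :=
    (intervalIntegrable_iff_integrableOn_Icc_of_le hb).mp
      (intervalIntegral.intervalIntegrable_rpow' (by norm_num))
  rw [← ofReal_integral_eq_lintegral_ofReal hint ((ae_restrict_iff' measurableSet_Icc).mpr
      (ae_of_all _ fun u hu => Real.rpow_nonneg hu.1 _)),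
    integral_Icc_eq_integral_Ioc, ← intervalIntegral.integral_of_le hb,
    integral_rpow (Or.inl (by norm_num)), Real.zero_rpow (by norm_num), Real.sqrt_eq_rpow]
  congr 1
  norm_num
  ring

theorem log_sq_le_rpow_neg_half {u : ℝ} (h0 : 0 < u) (h1 : u ≤ 1) :
    log u ^ 2 ≤ 16 * u ^ (-(1 / 2) : ℝ) := by
  have h := Real.log_le_rpow_div (inv_nonneg.mpr h0.le) (by norm_num : (0:ℝ) < 1 / 4)
  rw [Real.log_inv, Real.inv_rpow h0.le, ← Real.rpow_neg h0.le] at h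
  have hlog : log u ≤ 0 := Real.log_nonpos h0.le h1
  have hsq : (u ^ (-(1 / 4) : ℝ)) ^ 2 = u ^ (-(1 / 2) : ℝ) := by
    rw [← Real.rpow_natCast, ← Real.rpow_mul h0.le]; norm_num
  nlinarith [Real.rpow_nonneg h0.le (-(1 / 4) : ℝ)]

theorem log_sq_le_log_sq_add_rpow_neg_half {u b : ℝ} (hu : 0 ≤ u) (hub : u ≤ b) :
    log u ^ 2 ≤ 2 * log b ^ 2 + 32 * √b * u ^ (-(1 / 2) : ℝ) := by
  rcases hu.eq_or_lt with rfl | hu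
  · rw [Real.log_zero, Real.zero_rpow (by norm_num)]
    nlinarith [sq_nonneg (log b)]
  have hb : 0 < b := hu.trans_le hub
  have h := log_sq_le_rpow_neg_half (div_pos hu hb) ((div_le_one hb).mpr hub)
  rw [Real.log_div hu.ne' hb.ne', Real.div_rpow hu.le hb.le, Real.rpow_neg hb.le,
    ← Real.sqrt_eq_rpow, div_inv_eq_mul] at h
  nlinarith [sq_nonneg (log u - 2 * log b)]

theorem setLIntegral_Icc_log_sq_abs_le {b : ℝ} (hb : 0 < b) :
    ∫⁻ y in Icc (-b) b, ENNReal.ofReal (log |y| ^ 2)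
      ≤ ENNReal.ofReal (4 * b * (log b ^ 2 + 32)) := by
  have hmaps : MapsTo (fun y => |y|) (Icc (-b) b) (Icc 0 b) :=
    fun y hy => ⟨abs_nonneg y, abs_le.mpr hy⟩
  calc ∫⁻ y in Icc (-b) b, ENNReal.ofReal (log |y| ^ 2)
      ≤ 2 * ∫⁻ u in Icc 0 b, ENNReal.ofReal (log u ^ 2) :=
        setLIntegral_comp_abs_le measurableSet_Icc hmaps fun u => ENNReal.ofReal (log u ^ 2)
    _ ≤ 2 * ∫⁻ u in Icc 0 b, (ENNReal.ofReal (2 * log b ^ 2)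
          + ENNReal.ofReal (32 * √b) * ENNReal.ofReal (u ^ (-(1 / 2) : ℝ))) := by
        gcongr 1
        refine setLIntegral_mono' measurableSet_Icc fun u hu => ?_
        rw [← ENNReal.ofReal_mul (by positivity), ← ENNReal.ofReal_add (by positivity)
          (by positivity [Real.rpow_nonneg hu.1 (-(1 / 2) : ℝ)])]
        exact ENNReal.ofReal_le_ofReal (log_sq_le_log_sq_add_rpow_neg_half hu.1 hu.2)
    _ = 2 * (ENNReal.ofReal (2 * log b ^ 2) * ENNReal.ofReal b
          + ENNReal.ofReal (32 * √b) * ENNReal.ofReal (2 * √b)) := by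
        rw [lintegral_add_left measurable_const, setLIntegral_const, Real.volume_Icc, sub_zero,
          lintegral_const_mul' _ _ ENNReal.ofReal_ne_top, setLIntegral_Icc_rpow_neg_half hb.le]
    _ = ENNReal.ofReal (4 * b * (log b ^ 2 + 32)) := by
        rw [← ENNReal.ofReal_mul (by positivity), ← ENNReal.ofReal_mul (by positivity),
          ← ENNReal.ofReal_add (by positivity) (by positivity),
          ← ENNReal.ofReal_ofNat 2, ← ENNReal.ofReal_mul zero_le_two]
        congr 1
        have := Real.mul_self_sqrt hb.le
        linear_combination 128 * this

theorem norm_log_div_le_of_two_mul_norm_sub_le {z w : ℂ} (hw : w ≠ 0)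
    (h : 2 * ‖z - w‖ ≤ ‖w‖) :
    ‖Complex.log (z / w)‖ ≤ 3 / 2 * (‖z - w‖ / ‖w‖) := by
  have hq : z / w = 1 + (z - w) / w := by field_simp; ring
  rw [hq, ← norm_div]
  refine Complex.norm_log_one_add_half_le_self ?_
  rw [norm_div, div_le_iff₀ (norm_pos_iff.mpr hw)]
  linarith

theorem sq_norm_log (q : ℂ) : ‖Complex.log q‖ ^ 2 = log ‖q‖ ^ 2 + Complex.arg q ^ 2 := by
  rw [Complex.sq_norm, Complex.normSq_apply, Complex.log_re, Complex.log_im]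
  ring

theorem log_sq_le_of_le_of_le_three_halves {q r : ℝ} (hq : 0 < q) (hqr : q ≤ r)
    (hr : r ≤ 3 / 2) :
    log r ^ 2 ≤ 1 / 4 + log q ^ 2 := by
  rcases le_or_gt r 1 with h1 | h1
  · have hlr : log r ≤ 0 := Real.log_nonpos (by linarith) h1
    have hql : log q ≤ log r := Real.log_le_log hq hqr
    nlinarith
  · have h2 : 0 ≤ log r := Real.log_nonneg h1.le
    have h3 : log r ≤ 1 / 2 :=
      (Real.log_le_sub_one_of_pos (by linarith)).trans (by linarith)
    nlinarith [sq_nonneg (log q)]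

theorem sq_norm_log_div_le {z w : ℂ} (hre : z.re ≠ 0) (hz : ‖z‖ ≤ 3 / 2) :
    ‖Complex.log (z / w)‖ ^ 2
      ≤ π ^ 2 + 1 / 2 + 2 * log |z.re| ^ 2 + 2 * log ‖w‖ ^ 2 := by
  rcases eq_or_ne w 0 with hw | hw
  · subst hw
    simp only [div_zero, Complex.log_zero, norm_zero, Real.log_zero, zero_pow two_ne_zero,
      mul_zero, add_zero]
    positivity
  have hz0 : z ≠ 0 := fun h => hre (by simp [h])
  rw [sq_norm_log, norm_div, Real.log_div (norm_ne_zero_iff.mpr hz0) (norm_ne_zero_iff.mpr hw)]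
  have hmod := log_sq_le_of_le_of_le_three_halves (abs_pos.mpr hre) (Complex.abs_re_le_norm z) hz
  have harg : Complex.arg (z / w) ^ 2 ≤ π ^ 2 :=
    sq_le_sq' (by linarith [Complex.neg_pi_lt_arg (z / w)]) (Complex.arg_le_pi _)
  nlinarith [sq_nonneg (log ‖z‖ + log ‖w‖)]

theorem setLIntegral_compl_Icc_sq_norm_log_le {ζ : ℂ} (hζ : 0 < ‖ζ‖) :
    ∫⁻ y : ℝ in (Icc (-(2 * ‖ζ‖)) (2 * ‖ζ‖))ᶜ,
        ENNReal.ofReal (‖Complex.log ((y + Complex.I * ζ) / y)‖ ^ 2)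
      ≤ ENNReal.ofReal (9 / 4 * ‖ζ‖) := by
  have hpt : ∀ y ∈ (Icc (-(2 * ‖ζ‖)) (2 * ‖ζ‖))ᶜ,
      ENNReal.ofReal (‖Complex.log ((y + Complex.I * ζ) / y)‖ ^ 2)
        ≤ ENNReal.ofReal (9 / 4 * ‖ζ‖ ^ 2) * ENNReal.ofReal ((y ^ 2)⁻¹) := by
    intro y hy
    have hfar : 2 * ‖ζ‖ < |y| := not_le.mp fun h => hy (abs_le.mp h)
    have hy0 : (y : ℂ) ≠ 0 := by
      rw [Ne, Complex.ofReal_eq_zero, ← abs_eq_zero]; linarith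
    have hsub : ‖(y + Complex.I * ζ) - y‖ = ‖ζ‖ := by
      rw [add_sub_cancel_left, norm_mul, Complex.norm_I, one_mul]
    have h := norm_log_div_le_of_two_mul_norm_sub_le hy0
      (by rw [hsub, Complex.norm_real, Real.norm_eq_abs]; exact hfar.le)
    rw [hsub, Complex.norm_real, Real.norm_eq_abs] at h
    rw [← ENNReal.ofReal_mul (by positivity)]
    refine ENNReal.ofReal_le_ofReal ((pow_le_pow_left₀ (norm_nonneg _) h 2).trans_eq ?_)
    rw [mul_div_assoc', div_pow, sq_abs]
    ring
  calc ∫⁻ y : ℝ in (Icc (-(2 * ‖ζ‖)) (2 * ‖ζ‖))ᶜ,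
        ENNReal.ofReal (‖Complex.log ((y + Complex.I * ζ) / y)‖ ^ 2)
      ≤ ∫⁻ y : ℝ in (Icc (-(2 * ‖ζ‖)) (2 * ‖ζ‖))ᶜ,
          ENNReal.ofReal (9 / 4 * ‖ζ‖ ^ 2) * ENNReal.ofReal ((y ^ 2)⁻¹) :=
        setLIntegral_mono' measurableSet_Icc.compl hpt
    _ ≤ ENNReal.ofReal (9 / 4 * ‖ζ‖ ^ 2) * ENNReal.ofReal (2 / (2 * ‖ζ‖)) := by
        rw [lintegral_const_mul' _ _ ENNReal.ofReal_ne_top]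
        gcongr
        exact setLIntegral_compl_Icc_inv_sq_le (by positivity)
    _ = ENNReal.ofReal (9 / 4 * ‖ζ‖) := by
        rw [← ENNReal.ofReal_mul (by positivity)]
        congr 1
        field_simp

theorem setLIntegral_Icc_log_sq_abs_sub_le {b c : ℝ} (hb : 0 < b) (hc : |c| ≤ b) :
    ∫⁻ y in Icc (-(2 * b)) (2 * b), ENNReal.ofReal (log |y - c| ^ 2)
      ≤ ENNReal.ofReal (12 * b * (log (3 * b) ^ 2 + 32)) := by
  have hmaps : MapsTo (fun y => y - c) (Icc (-(2 * b)) (2 * b)) (Icc (-(3 * b)) (3 * b)) :=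
    fun y hy => by
      obtain ⟨hc₁, hc₂⟩ := abs_le.mp hc
      exact ⟨by linarith [hy.1], by linarith [hy.2]⟩
  calc ∫⁻ y in Icc (-(2 * b)) (2 * b), ENNReal.ofReal (log |y - c| ^ 2)
      ≤ (ENNReal.ofReal 1)⁻¹ *
          ∫⁻ u in Icc (-(3 * b)) (3 * b), ENNReal.ofReal (log |u| ^ 2) :=
        setLIntegral_comp_le_of_le_abs_deriv one_pos measurableSet_Icc
          (fun y _ => ((hasDerivAt_id y).sub_const c).hasDerivWithinAt)
          sub_left_injective.injOn (fun y _ => by simp) hmaps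
          fun u => ENNReal.ofReal (log |u| ^ 2)
    _ ≤ ENNReal.ofReal (12 * b * (log (3 * b) ^ 2 + 32)) := by
        rw [ENNReal.ofReal_one, inv_one, one_mul]
        convert setLIntegral_Icc_log_sq_abs_le (by positivity : 0 < 3 * b) using 2
        ring

theorem setLIntegral_Icc_sq_norm_log_le {ζ : ℂ} (hζ : 0 < ‖ζ‖)
    (hζ' : ‖ζ‖ ≤ 1 / 2) :
    ∫⁻ y : ℝ in Icc (-(2 * ‖ζ‖)) (2 * ‖ζ‖),
        ENNReal.ofReal (‖Complex.log ((y + Complex.I * ζ) / y)‖ ^ 2)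
      ≤ ENNReal.ofReal (4 * ‖ζ‖ * (π ^ 2 + 1 / 2)
          + 24 * ‖ζ‖ * (log (3 * ‖ζ‖) ^ 2 + 32)
          + 16 * ‖ζ‖ * (log (2 * ‖ζ‖) ^ 2 + 32)) := by
  set ε := ‖ζ‖
  have hpt : ∀ᵐ y : ℝ ∂volume.restrict (Icc (-(2 * ε)) (2 * ε)),
      ENNReal.ofReal (‖Complex.log ((y + Complex.I * ζ) / y)‖ ^ 2)
        ≤ ENNReal.ofReal (π ^ 2 + 1 / 2) + 2 * ENNReal.ofReal (log |y - ζ.im| ^ 2)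
          + 2 * ENNReal.ofReal (log |y| ^ 2) := by
    rw [ae_restrict_iff' measurableSet_Icc]
    -- at `y = ζ.im` the real part of `y + iζ` vanishes and `log |0| = 0` is a junk value
    filter_upwards [Measure.ae_ne volume ζ.im] with y hy hyI
    have hre : ((y : ℂ) + Complex.I * ζ).re = y - ζ.im := by simp [sub_eq_add_neg]
    have hnorm : ‖(y : ℂ) + Complex.I * ζ‖ ≤ 3 / 2 := by
      calc ‖(y : ℂ) + Complex.I * ζ‖ ≤ |y| + ε := by
            refine (norm_add_le _ _).trans_eq ?_
            rw [Complex.norm_real, Real.norm_eq_abs, norm_mul, Complex.norm_I, one_mul]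
        _ ≤ 3 / 2 := by linarith [abs_le.mpr hyI]
    have h := sq_norm_log_div_le (w := (y : ℂ)) (by rw [hre]; exact sub_ne_zero.mpr hy) hnorm
    rw [hre, Complex.norm_real, Real.norm_eq_abs] at h
    rw [← ENNReal.ofReal_ofNat 2, ← ENNReal.ofReal_mul zero_le_two,
      ← ENNReal.ofReal_mul zero_le_two, ← ENNReal.ofReal_add (by positivity) (by positivity),
      ← ENNReal.ofReal_add (by positivity) (by positivity)]
    exact ENNReal.ofReal_le_ofReal h
  have hmeas : Measurable fun y : ℝ => 2 * ENNReal.ofReal (log |y| ^ 2) := by fun_prop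
  calc ∫⁻ y : ℝ in Icc (-(2 * ε)) (2 * ε),
        ENNReal.ofReal (‖Complex.log ((y + Complex.I * ζ) / y)‖ ^ 2)
      ≤ ∫⁻ y : ℝ in Icc (-(2 * ε)) (2 * ε), (ENNReal.ofReal (π ^ 2 + 1 / 2)
          + 2 * ENNReal.ofReal (log |y - ζ.im| ^ 2) + 2 * ENNReal.ofReal (log |y| ^ 2)) :=
        lintegral_mono_ae hpt
    _ = ENNReal.ofReal (π ^ 2 + 1 / 2) * ENNReal.ofReal (4 * ε)
          + 2 * (∫⁻ y in Icc (-(2 * ε)) (2 * ε), ENNReal.ofReal (log |y - ζ.im| ^ 2))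
          + 2 * (∫⁻ y in Icc (-(2 * ε)) (2 * ε), ENNReal.ofReal (log |y| ^ 2)) := by
        rw [lintegral_add_right _ hmeas, lintegral_add_left measurable_const,
          setLIntegral_const, Real.volume_Icc, lintegral_const_mul' _ _ (by simp),
          lintegral_const_mul' _ _ (by simp), show 2 * ε - -(2 * ε) = 4 * ε by ring]
    _ ≤ ENNReal.ofReal (π ^ 2 + 1 / 2) * ENNReal.ofReal (4 * ε)
          + 2 * ENNReal.ofReal (12 * ε * (log (3 * ε) ^ 2 + 32))
          + 2 * ENNReal.ofReal (4 * (2 * ε) * (log (2 * ε) ^ 2 + 32)) := by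
        gcongr
        · exact setLIntegral_Icc_log_sq_abs_sub_le hζ (Complex.abs_im_le_norm ζ)
        · exact setLIntegral_Icc_log_sq_abs_le (by positivity)
    _ = ENNReal.ofReal (4 * ε * (π ^ 2 + 1 / 2)
          + 24 * ε * (log (3 * ε) ^ 2 + 32)
          + 16 * ε * (log (2 * ε) ^ 2 + 32)) := by
        rw [← ENNReal.ofReal_ofNat 2, ← ENNReal.ofReal_mul (by positivity),
          ← ENNReal.ofReal_mul zero_le_two, ← ENNReal.ofReal_mul zero_le_two,
          ← ENNReal.ofReal_add (by positivity) (by positivity),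
          ← ENNReal.ofReal_add (by positivity) (by positivity)]
        congr 1
        ring

theorem log_two_le_log_inv {ε : ℝ} (hε : 0 < ε) (hε' : ε ≤ 1 / 2) :
    log 2 ≤ log ε⁻¹ :=
  Real.log_le_log two_pos (by rw [le_inv_comm₀ two_pos hε]; linarith)

theorem log_mul_sq_le {c ε : ℝ} (hc : 1 ≤ c) (hc' : c ≤ 8) (hε : 0 < ε)
    (hε' : ε ≤ 1 / 2) :
    log (c * ε) ^ 2 ≤ 4 * log ε⁻¹ ^ 2 := by
  have hL := log_two_le_log_inv hε hε'
  have hc₀ : 0 ≤ log c := Real.log_nonneg hc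
  have hc₈ : log c ≤ 3 * log 2 := by
    rw [← Real.log_rpow two_pos]; exact Real.log_le_log (by linarith) (by norm_num; linarith)
  rw [Real.log_mul (by positivity) hε.ne', ← neg_neg (log ε), ← Real.log_inv]
  nlinarith [Real.log_pos one_lt_two]

theorem lintegral_sq_norm_log_le {ζ : ℂ} (hζ : 0 < ‖ζ‖) (hζ' : ‖ζ‖ ≤ 1 / 2) :
    ∫⁻ y : ℝ, ENNReal.ofReal (‖Complex.log ((y + Complex.I * ζ) / y)‖ ^ 2)
      ≤ ENNReal.ofReal (3000 * ‖ζ‖ * log ‖ζ‖⁻¹ ^ 2) := by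
  set ε := ‖ζ‖
  rw [← lintegral_add_compl _ (measurableSet_Icc (a := -(2 * ε)) (b := 2 * ε))]
  refine (add_le_add (setLIntegral_Icc_sq_norm_log_le hζ hζ')
    (setLIntegral_compl_Icc_sq_norm_log_le hζ)).trans ?_
  rw [← ENNReal.ofReal_add (by positivity) (by positivity)]
  refine ENNReal.ofReal_le_ofReal ?_
  have h3 := log_mul_sq_le (c := 3) (by norm_num) (by norm_num) hζ hζ'
  have h2 := log_mul_sq_le (c := 2) (by norm_num) (by norm_num) hζ hζ'
  have hL : 0.48 ≤ log ε⁻¹ ^ 2 := by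
    have := log_two_le_log_inv hζ hζ'
    nlinarith [Real.log_two_gt_d9]
  have hπ : π ^ 2 ≤ 16 := by nlinarith [Real.pi_le_four, Real.pi_pos]
  nlinarith [mul_le_mul_of_nonneg_left h3 hζ.le, mul_le_mul_of_nonneg_left h2 hζ.le,
    mul_le_mul_of_nonneg_left hL hζ.le, mul_le_mul_of_nonneg_left hπ hζ.le]

theorem stmt9_general (U U' : ℝ → ℝ) (m : ℝ) (hm : 0 < m)
    (hU : ∀ x ∈ Set.Icc (-1:ℝ) 1, HasDerivWithinAt U (U' x) (Set.Icc (-1:ℝ) 1) x)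
    (hU'm : ∀ x ∈ Set.Icc (-1:ℝ) 1, m ≤ U' x)
    (ν₀ : ℝ) :
    ∃ C > 0, ∀ μ ν : ℝ, μ ≠ 0 →
      0 < ‖(μ + ν * Complex.I) - ν₀ * Complex.I‖ →
      ‖(μ + ν * Complex.I) - ν₀ * Complex.I‖ ≤ 1 / 2 →
      ∫⁻ x in Set.Ioo (-1:ℝ) 1,
          ENNReal.ofReal
            (‖Complex.log ((((U x - ν : ℝ) : ℂ) + Complex.I * (μ : ℂ)) /
                (((U x - ν₀ : ℝ) : ℂ)))‖ ^ 2)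
        ≤ ENNReal.ofReal
            ((C * Real.sqrt (‖(μ + ν * Complex.I) - ν₀ * Complex.I‖) *
              Real.log ((‖(μ + ν * Complex.I) - ν₀ * Complex.I‖)⁻¹)) ^ 2) := by
  have hderiv : ∀ x ∈ Ioo (-1 : ℝ) 1, HasDerivWithinAt U (U' x) (Ioo (-1) 1) x :=
    fun x hx => (hU x (Ioo_subset_Icc_self hx)).mono Ioo_subset_Icc_self
  have hmono : StrictMonoOn (fun x => U x - ν₀) (Ioo (-1) 1) := by
    refine fun x hx y hy hxy => sub_lt_sub_right ?_ ν₀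
    refine strictMonoOn_of_hasDerivWithinAt_pos (convex_Ioo _ _)
      (fun x hx => (hderiv x hx).continuousWithinAt) (by rwa [interior_Ioo]) ?_ hx hy hxy
    rw [interior_Ioo]
    exact fun x hx => hm.trans_le (hU'm x (Ioo_subset_Icc_self hx))
  refine ⟨√(3000 / m), by positivity, fun μ ν _ hpos hhalf => ?_⟩
  set ζ : ℂ := (μ + ν * Complex.I) - ν₀ * Complex.I
  have hnum : ∀ x,
      ((U x - ν : ℝ) : ℂ) + Complex.I * μ = ((U x - ν₀ : ℝ) : ℂ) + Complex.I * ζ :=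
    fun x => by push_cast; linear_combination (ν₀ - ν) * Complex.I_sq
  simp_rw [hnum]
  refine (setLIntegral_comp_le_of_le_abs_deriv hm measurableSet_Ioo
    (fun x hx => (hderiv x hx).sub_const ν₀) hmono.injOn
    (fun x hx => (hU'm x (Ioo_subset_Icc_self hx)).trans (le_abs_self _)) (mapsTo_univ _ _)
    fun y : ℝ => ENNReal.ofReal (‖Complex.log ((y + Complex.I * ζ) / y)‖ ^ 2)).trans ?_
  rw [Measure.restrict_univ]
  calc (ENNReal.ofReal m)⁻¹ * ∫⁻ y : ℝ,
        ENNReal.ofReal (‖Complex.log ((y + Complex.I * ζ) / y)‖ ^ 2)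
      ≤ (ENNReal.ofReal m)⁻¹ * ENNReal.ofReal (3000 * ‖ζ‖ * log ‖ζ‖⁻¹ ^ 2) := by
        gcongr
        exact lintegral_sq_norm_log_le hpos hhalf
    _ = ENNReal.ofReal ((√(3000 / m) * √‖ζ‖ * log ‖ζ‖⁻¹) ^ 2) := by
        rw [← ENNReal.ofReal_inv_of_pos hm, ← ENNReal.ofReal_mul (by positivity), mul_pow,
          mul_pow, Real.sq_sqrt (by positivity), Real.sq_sqrt (norm_nonneg _)]
        congr 1
        ring

/-- for `U ∈ C¹([-1,1])` with `U' ≥ m > 0` and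
`ν₀ ∈ [U(-1),U(1)]`, there is `C > 0` such that for all `λ = μ + iν` with
`0 < |λ - iν₀| ≤ 1/2` and `μ ≠ 0`,
`‖log((U+iλ)/(U-ν₀))‖_{L²(-1,1)} ≤ C |λ-iν₀|^{1/2} log(|λ-iν₀|⁻¹)`,
where `(U+iλ)(x) = U(x) - ν + iμ`. -/
theorem stmt9 (U U' : ℝ → ℝ) (m : ℝ) (hm : 0 < m)
    (hU : ∀ x ∈ Set.Icc (-1:ℝ) 1, HasDerivWithinAt U (U' x) (Set.Icc (-1:ℝ) 1) x)
    (hU'c : ContinuousOn U' (Set.Icc (-1:ℝ) 1))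
    (hU'm : ∀ x ∈ Set.Icc (-1:ℝ) 1, m ≤ U' x)
    (ν₀ : ℝ) (hν₀ : ν₀ ∈ Set.Icc (U (-1)) (U 1)) :
    ∃ C > 0, ∀ μ ν : ℝ, μ ≠ 0 →
      0 < ‖(μ + ν * Complex.I) - ν₀ * Complex.I‖ →
      ‖(μ + ν * Complex.I) - ν₀ * Complex.I‖ ≤ 1 / 2 →
      ∫⁻ x in Set.Ioo (-1:ℝ) 1,
          ENNReal.ofReal
            (‖Complex.log ((((U x - ν : ℝ) : ℂ) + Complex.I * (μ : ℂ)) /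
                (((U x - ν₀ : ℝ) : ℂ)))‖ ^ 2)
        ≤ ENNReal.ofReal
            ((C * Real.sqrt (‖(μ + ν * Complex.I) - ν₀ * Complex.I‖) *
              Real.log ((‖(μ + ν * Complex.I) - ν₀ * Complex.I‖)⁻¹)) ^ 2) :=
  stmt9_general U U' m hm hU hU'm ν₀
end

section
/- Let $U \in C^2([-1,1])$ be real-valued, let $\alpha \geq 0$, $\beta > 0$, $\lambda = \mu + i\nu \in \mathbb{C}$ with $\nu \geq 2(\|U\|_\infty + \|U''\|_\infty + 1)$ and $|\mu| \leq \nu$. If $\phi \in H^4(-1,1)$ with $\phi(\pm 1) = \phi'(\pm 1) = 0$ satisfies $\big(-\tfrac{d^2}{dx^2} + i\beta(U + i\lambda)\big)(-\phi'' + \alpha^2\phi) + i\beta U'' \phi = f$, then $\|\phi'\|_{L^2}^2 + \alpha^2\|\phi\|_{L^2}^2 \leq \frac{2}{\beta\nu}\|\phi\|_{L^2}\|f\|_{L^2}$. -/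
/-!
Pair the equation with `φ`: with `⟨g, h⟩ = ∫ conj g * h` over `(-1, 1)`, integration by parts
against the boundary conditions makes `⟨φ, φ''''⟩ = ‖φ''‖²` and `⟨φ, φ''⟩ = -‖φ'‖²` real and
gives `2 Re ⟨U'φ, φ'⟩ = -⟨U''φ, φ⟩`, so that
`Im ⟨φ, f⟩ = β (⟨(U - ν)φ', φ'⟩ + α² ⟨(U - ν)φ, φ⟩ + ½ ⟨U''φ, φ⟩)`.
Bounding `U` by `‖U‖_∞` and `⟨U''φ, φ⟩` by `‖U''‖_∞ ‖φ‖² ≤ 2 ‖U''‖_∞ ‖φ'‖²` (Poincaré, from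
`φ(-1) = 0`), the lower bound on `ν` gives `-Im ⟨φ, f⟩ ≥ βν/2 (‖φ'‖² + α² ‖φ‖²)`, and
Cauchy–Schwarz bounds `-Im ⟨φ, f⟩` by `‖φ‖ ‖f‖`.
-/

open MeasureTheory Set
open scoped Interval

section IntegrationByParts

variable {𝕜 : Type*} [RCLike 𝕜] {a b : ℝ}

theorem integral_primitive_mul_eq_integral_mul_integral {p q : ℝ → 𝕜} (hab : a ≤ b)
    (hp : IntervalIntegrable p volume a b) (hq : IntervalIntegrable q volume a b) :
    ∫ x in a..b, (∫ t in a..x, p t) * q x = ∫ t in a..b, p t * ∫ x in t..b, q x := by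
  rw [intervalIntegrable_iff_integrableOn_Ioc_of_le hab] at hp hq
  set μ := volume.restrict (Ioc a b)
  set G : ℝ × ℝ → 𝕜 := {z | z.2 ≤ z.1}.indicator fun z => q z.1 * p z.2
  have hG : Integrable G (μ.prod μ) :=
    (hq.mul_prod hp).indicator (isClosed_le continuous_snd continuous_fst).measurableSet
  have hslice_x : ∀ x ∈ Ioc a b, ∫ t, G (x, t) ∂μ = (∫ t in a..x, p t) * q x := by
    intro x hx
    have hs : Iic x ∩ Ioc a b = Ioc a x := by
      ext t; simp only [mem_inter_iff, mem_Iic, mem_Ioc]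
      exact ⟨fun h => ⟨h.2.1, h.1⟩, fun h => ⟨h.2, h.1, h.2.trans hx.2⟩⟩
    change ∫ t, (Iic x).indicator (fun t => q x * p t) t ∂μ = _
    rw [integral_indicator measurableSet_Iic, Measure.restrict_restrict measurableSet_Iic, hs,
      integral_const_mul, intervalIntegral.integral_of_le hx.1.le, mul_comm]
  have hslice_t : ∀ t ∈ Ioc a b, ∫ x, G (x, t) ∂μ = p t * ∫ x in t..b, q x := by
    intro t ht
    have hs : Ici t ∩ Ioc a b = Icc t b := by
      ext x; simp only [mem_inter_iff, mem_Ici, mem_Ioc, mem_Icc]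
      exact ⟨fun h => ⟨h.1, h.2.2⟩, fun h => ⟨h.1, ht.1.trans_le h.1, h.2⟩⟩
    change ∫ x, (Ici t).indicator (fun x => q x * p t) x ∂μ = _
    rw [integral_indicator measurableSet_Ici, Measure.restrict_restrict measurableSet_Ici, hs,
      integral_mul_const, intervalIntegral.integral_of_le ht.2, integral_Icc_eq_integral_Ioc,
      mul_comm]
  rw [intervalIntegral.integral_of_le hab, intervalIntegral.integral_of_le hab,
    ← setIntegral_congr_fun measurableSet_Ioc hslice_x,
    ← setIntegral_congr_fun measurableSet_Ioc hslice_t]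
  exact integral_integral_swap (f := fun x t => G (x, t)) hG

theorem eq_add_integral_of_hasDerivWithinAt {u u' : ℝ → 𝕜} (hab : a ≤ b)
    (hu : ∀ x ∈ Icc a b, HasDerivWithinAt u (u' x) (Icc a b) x)
    (hu' : IntervalIntegrable u' volume a b) {x : ℝ} (hx : x ∈ Icc a b) :
    u x = u a + ∫ t in a..x, u' t := by
  have hsub : Icc a x ⊆ Icc a b := Icc_subset_Icc_right hx.2
  rw [intervalIntegral.integral_eq_sub_of_hasDeriv_right_of_le hx.1
    (fun t ht => (hu t (hsub ht)).continuousWithinAt.mono hsub)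
    (fun t ht => ((hu t (hsub (Ioo_subset_Icc_self ht))).hasDerivAt
      (Icc_mem_nhds ht.1 (ht.2.trans_le hx.2))).hasDerivWithinAt)
    (hu'.mono_set (by rw [uIcc_of_le hab, uIcc_of_le hx.1]; exact hsub))]
  ring

theorem continuousOn_of_eq_add_integral {v v' : ℝ → 𝕜} (hab : a ≤ b)
    (hv : ∀ x ∈ Icc a b, v x = v a + ∫ t in a..x, v' t) (hv' : IntervalIntegrable v' volume a b) :
    ContinuousOn v (Icc a b) := by
  have := intervalIntegral.continuousOn_primitive_interval' hv' left_mem_uIcc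
  rw [uIcc_of_le hab] at this
  exact (continuousOn_const.add this).congr hv

/-- Integration by parts against an absolutely continuous `v` (such as `φ'''`): writing `u` as the
primitive of `u'`, Fubini moves the derivative from `v` onto `u`. -/
theorem integral_mul_eq_sub_of_eq_add_integral {u u' v v' : ℝ → 𝕜} (hab : a ≤ b)
    (hu : ∀ x ∈ Icc a b, HasDerivWithinAt u (u' x) (Icc a b) x)
    (hu' : IntervalIntegrable u' volume a b)
    (hv : ∀ x ∈ Icc a b, v x = v a + ∫ t in a..x, v' t) (hv' : IntervalIntegrable v' volume a b) :
    ∫ x in a..b, u x * v' x = u b * v b - u a * v a - ∫ x in a..b, u' x * v x := by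
  have hprim : ContinuousOn (fun x => ∫ t in a..x, u' t) (uIcc a b) :=
    intervalIntegral.continuousOn_primitive_interval' hu' left_mem_uIcc
  have hvc : ContinuousOn v (uIcc a b) := by
    rw [uIcc_of_le hab]; exact continuousOn_of_eq_add_integral hab hv hv'
  have hv'_tail : ∀ t ∈ Icc a b, ∫ x in t..b, v' x = v b - v t := by
    intro t ht
    rw [hv b (right_mem_Icc.2 hab), hv t ht, ← intervalIntegral.integral_interval_sub_left hv'
      (hv'.mono_set (by rw [uIcc_of_le hab, uIcc_of_le ht.1]; exact Icc_subset_Icc_right ht.2))]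
    ring
  calc ∫ x in a..b, u x * v' x
      = ∫ x in a..b, (u a * v' x + (∫ t in a..x, u' t) * v' x) := by
        refine intervalIntegral.integral_congr fun x hx => ?_
        rw [uIcc_of_le hab] at hx
        rw [eq_add_integral_of_hasDerivWithinAt hab hu hu' hx, add_mul]
    _ = u a * (v b - v a) + ∫ t in a..b, (u' t * v b - u' t * v t) := by
        rw [intervalIntegral.integral_add (hv'.const_mul _) (hv'.continuousOn_mul hprim),
          intervalIntegral.integral_const_mul,
          integral_primitive_mul_eq_integral_mul_integral hab hu' hv',
          ← hv'_tail a (left_mem_Icc.2 hab)]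
        congr 1
        refine intervalIntegral.integral_congr fun t ht => ?_
        rw [uIcc_of_le hab] at ht
        rw [hv'_tail t ht, mul_sub]
    _ = _ := by
        rw [intervalIntegral.integral_sub (hu'.mul_const _) (hu'.mul_continuousOn hvc),
          intervalIntegral.integral_mul_const]
        linear_combination
          (-v b) * eq_add_integral_of_hasDerivWithinAt hab hu hu' (right_mem_Icc.2 hab)

end IntegrationByParts

section ComplexIntegrationByParts

variable {a b : ℝ}

theorem integral_ofReal_mul_star_mul_self (w : ℝ → ℝ) (u : ℝ → ℂ) :
    ∫ x in a..b, (w x : ℂ) * (star (u x) * u x) = ((∫ x in a..b, w x * ‖u x‖ ^ 2 : ℝ) : ℂ) := by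
  rw [← intervalIntegral.integral_ofReal]
  refine intervalIntegral.integral_congr fun x _ => ?_
  rw [Complex.star_def, Complex.conj_mul']
  push_cast
  rfl

theorem integral_star_mul_self (u : ℝ → ℂ) :
    ∫ x in a..b, star (u x) * u x = ((∫ x in a..b, ‖u x‖ ^ 2 : ℝ) : ℂ) := by
  simpa using integral_ofReal_mul_star_mul_self (a := a) (b := b) (fun _ => 1) u

theorem integral_ofReal_mul_star_mul_deriv {w w' : ℝ → ℝ} {u u' v v' : ℝ → ℂ} (hab : a ≤ b)
    (hw : ∀ x ∈ Icc a b, HasDerivWithinAt w (w' x) (Icc a b) x)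
    (hu : ∀ x ∈ Icc a b, HasDerivWithinAt u (u' x) (Icc a b) x)
    (hv : ∀ x ∈ Icc a b, HasDerivWithinAt v (v' x) (Icc a b) x)
    (hw' : ContinuousOn w' (Icc a b)) (hu' : ContinuousOn u' (Icc a b))
    (hv' : ContinuousOn v' (Icc a b)) :
    ∫ x in a..b, (w x : ℂ) * (star (u x) * v' x)
      = w b * (star (u b) * v b) - w a * (star (u a) * v a)
        - ∫ x in a..b, ((w' x : ℂ) * (star (u x) * v x) + w x * (star (u' x) * v x)) := by
  have hwc : ContinuousOn w (Icc a b) := fun x hx => (hw x hx).continuousWithinAt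
  have huc : ContinuousOn u (Icc a b) := fun x hx => (hu x hx).continuousWithinAt
  rw [← uIcc_of_le hab] at hw hu hv
  have hwu : ∀ x ∈ [[a, b]], HasDerivWithinAt (fun x => (w x : ℂ) * star (u x))
      ((w' x : ℂ) * star (u x) + w x * star (u' x)) [[a, b]] x :=
    fun x hx => (hw x hx).ofReal_comp.mul (hu x hx).star
  have := intervalIntegral.integral_mul_deriv_eq_deriv_mul_of_hasDerivWithinAt hwu hv
    (ContinuousOn.intervalIntegrable_of_Icc hab (by fun_prop))
    (hv'.intervalIntegrable_of_Icc hab)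
  simp only [mul_assoc, add_mul] at this
  exact this

theorem integral_ofReal_mul_star_mul_deriv_deriv {w w' : ℝ → ℝ} {u u' u'' : ℝ → ℂ} (hab : a ≤ b)
    (hw : ∀ x ∈ Icc a b, HasDerivWithinAt w (w' x) (Icc a b) x)
    (hu : ∀ x ∈ Icc a b, HasDerivWithinAt u (u' x) (Icc a b) x)
    (hu' : ∀ x ∈ Icc a b, HasDerivWithinAt u' (u'' x) (Icc a b) x)
    (hw' : ContinuousOn w' (Icc a b)) (hu'' : ContinuousOn u'' (Icc a b)) :
    ∫ x in a..b, (w x : ℂ) * (star (u x) * u'' x)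
      = w b * (star (u b) * u' b) - w a * (star (u a) * u' a)
        - (∫ x in a..b, (w' x : ℂ) * (star (u x) * u' x))
        - ((∫ x in a..b, w x * ‖u' x‖ ^ 2 : ℝ) : ℂ) := by
  have hwc : ContinuousOn w (Icc a b) := fun x hx => (hw x hx).continuousWithinAt
  have huc : ContinuousOn u (Icc a b) := fun x hx => (hu x hx).continuousWithinAt
  have hu'c : ContinuousOn u' (Icc a b) := fun x hx => (hu' x hx).continuousWithinAt
  rw [integral_ofReal_mul_star_mul_deriv hab hw hu hu' hw' hu'c hu'',
    intervalIntegral.integral_add (ContinuousOn.intervalIntegrable_of_Icc hab (by fun_prop))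
      (ContinuousOn.intervalIntegrable_of_Icc hab (by fun_prop)),
    integral_ofReal_mul_star_mul_self]
  ring

theorem integral_star_mul_deriv_deriv {u u' u'' : ℝ → ℂ} (hab : a ≤ b)
    (hu : ∀ x ∈ Icc a b, HasDerivWithinAt u (u' x) (Icc a b) x)
    (hu' : ∀ x ∈ Icc a b, HasDerivWithinAt u' (u'' x) (Icc a b) x)
    (hu'' : ContinuousOn u'' (Icc a b)) :
    ∫ x in a..b, star (u x) * u'' x
      = star (u b) * u' b - star (u a) * u' a - ((∫ x in a..b, ‖u' x‖ ^ 2 : ℝ) : ℂ) := by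
  simpa using integral_ofReal_mul_star_mul_deriv_deriv hab
    (fun x _ => hasDerivWithinAt_const x _ (1 : ℝ)) hu hu' continuousOn_const hu''

theorem two_mul_re_integral_ofReal_mul_star_mul_deriv {w w' : ℝ → ℝ} {u u' : ℝ → ℂ}
    (hab : a ≤ b)
    (hw : ∀ x ∈ Icc a b, HasDerivWithinAt w (w' x) (Icc a b) x)
    (hu : ∀ x ∈ Icc a b, HasDerivWithinAt u (u' x) (Icc a b) x)
    (hw' : ContinuousOn w' (Icc a b)) (hu' : ContinuousOn u' (Icc a b)) :
    2 * (∫ x in a..b, (w x : ℂ) * (star (u x) * u' x)).re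
      = w b * ‖u b‖ ^ 2 - w a * ‖u a‖ ^ 2 - ∫ x in a..b, w' x * ‖u x‖ ^ 2 := by
  have hwc : ContinuousOn w (Icc a b) := fun x hx => (hw x hx).continuousWithinAt
  have huc : ContinuousOn u (Icc a b) := fun x hx => (hu x hx).continuousWithinAt
  have hconj : ∫ x in a..b, (w x : ℂ) * (star (u' x) * u x)
      = star (∫ x in a..b, (w x : ℂ) * (star (u x) * u' x)) := by
    rw [Complex.star_def, ← intervalIntegral.intervalIntegral_conj]
    refine intervalIntegral.integral_congr fun x _ => ?_
    simp only [map_mul, Complex.conj_ofReal, Complex.conj_conj]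
    ring
  have h := integral_ofReal_mul_star_mul_deriv hab hw hu hu hw' hu' hu'
  rw [intervalIntegral.integral_add (ContinuousOn.intervalIntegrable_of_Icc hab (by fun_prop))
      (ContinuousOn.intervalIntegrable_of_Icc hab (by fun_prop)),
    integral_ofReal_mul_star_mul_self, hconj] at h
  simp only [Complex.star_def, Complex.conj_mul'] at h
  have h_re := congrArg Complex.re h
  simp only [Complex.sub_re, Complex.add_re, Complex.re_ofReal_mul, ← Complex.ofReal_pow,
    Complex.ofReal_re, Complex.conj_re] at h_re
  simp only [Complex.star_def]
  linarith

theorem integral_star_mul_fourth_deriv {u u' u'' u''' u'''' : ℝ → ℂ} (hab : a ≤ b)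
    (hu : ∀ x ∈ Icc a b, HasDerivWithinAt u (u' x) (Icc a b) x)
    (hu' : ∀ x ∈ Icc a b, HasDerivWithinAt u' (u'' x) (Icc a b) x)
    (hu'' : ∀ x ∈ Icc a b, HasDerivWithinAt u'' (u''' x) (Icc a b) x)
    (hu''' : ∀ x ∈ Icc a b, u''' x = u''' a + ∫ t in a..x, u'''' t)
    (hu'''' : IntervalIntegrable u'''' volume a b)
    (hua : u a = 0) (hub : u b = 0) (hu'a : u' a = 0) (hu'b : u' b = 0) :
    ∫ x in a..b, star (u x) * u'''' x = ((∫ x in a..b, ‖u'' x‖ ^ 2 : ℝ) : ℂ) := by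
  have hu'c : ContinuousOn u' (Icc a b) := fun x hx => (hu' x hx).continuousWithinAt
  rw [integral_mul_eq_sub_of_eq_add_integral hab (fun x hx => (hu x hx).star)
      (hu'c.star.intervalIntegrable_of_Icc hab) hu''' hu'''',
    integral_star_mul_deriv_deriv hab hu' hu'' (continuousOn_of_eq_add_integral hab hu''' hu'''')]
  simp [hua, hub, hu'a, hu'b]

end ComplexIntegrationByParts

section Estimates

variable {𝕜 : Type*} [RCLike 𝕜] {a b : ℝ}

theorem integral_norm_mul_norm_le_sqrt_mul_sqrt {α E : Type*} [MeasurableSpace α] {μ : Measure α}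
    [NormedAddCommGroup E] {g h : α → E} (hg : MemLp g 2 μ) (hh : MemLp h 2 μ) :
    ∫ x, ‖g x‖ * ‖h x‖ ∂μ ≤ √(∫ x, ‖g x‖ ^ 2 ∂μ) * √(∫ x, ‖h x‖ ^ 2 ∂μ) := by
  have h2 : ENNReal.ofReal 2 = 2 := ENNReal.ofReal_ofNat 2
  have := integral_mul_norm_le_Lp_mul_Lq Real.HolderConjugate.two_two (h2 ▸ hg) (h2 ▸ hh)
  simpa only [Real.sqrt_eq_rpow, Real.rpow_two] using this

theorem ContinuousOn.memLp_two_restrict_Ioc {E : Type*} [NormedAddCommGroup E] {g : ℝ → E}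
    (hg : ContinuousOn g (Icc a b)) : MemLp g 2 (volume.restrict (Ioc a b)) :=
  (memLp_two_iff_integrable_sq_norm
    ((hg.mono Ioc_subset_Icc_self).aestronglyMeasurable measurableSet_Ioc)).2
    ((hg.norm.pow 2).integrableOn_Icc.mono_set Ioc_subset_Icc_self)

theorem norm_integral_star_mul_le {g h : ℝ → 𝕜} (hab : a ≤ b)
    (hg : MemLp g 2 (volume.restrict (Ioc a b))) (hh : MemLp h 2 (volume.restrict (Ioc a b))) :
    ‖∫ x in a..b, star (g x) * h x‖ ≤ √(∫ x in a..b, ‖g x‖ ^ 2) * √(∫ x in a..b, ‖h x‖ ^ 2) := by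
  simp only [intervalIntegral.integral_of_le hab]
  calc ‖∫ x in Ioc a b, star (g x) * h x‖ ≤ ∫ x in Ioc a b, ‖star (g x) * h x‖ :=
        norm_integral_le_integral_norm _
    _ = ∫ x in Ioc a b, ‖g x‖ * ‖h x‖ := by simp only [norm_mul, norm_star]
    _ ≤ _ := integral_norm_mul_norm_le_sqrt_mul_sqrt hg hh

theorem integral_mul_norm_sq_le_of_le {E : Type*} [NormedAddCommGroup E] {w : ℝ → ℝ} {g : ℝ → E}
    {M : ℝ} (hab : a ≤ b) (hw : ContinuousOn w (Icc a b)) (hg : ContinuousOn g (Icc a b))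
    (hM : ∀ x ∈ Icc a b, w x ≤ M) :
    ∫ x in a..b, w x * ‖g x‖ ^ 2 ≤ M * ∫ x in a..b, ‖g x‖ ^ 2 := by
  rw [← intervalIntegral.integral_const_mul]
  exact intervalIntegral.integral_mono_on hab
    (ContinuousOn.intervalIntegrable_of_Icc hab (by fun_prop))
    (ContinuousOn.intervalIntegrable_of_Icc hab (by fun_prop))
    fun x hx => mul_le_mul_of_nonneg_right (hM x hx) (sq_nonneg _)

theorem norm_sub_sq_le_mul_integral_norm_sq {u u' : ℝ → 𝕜} (hab : a ≤ b)
    (hu : ∀ x ∈ Icc a b, HasDerivWithinAt u (u' x) (Icc a b) x) (hu' : ContinuousOn u' (Icc a b))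
    {x : ℝ} (hx : x ∈ Icc a b) :
    ‖u x - u a‖ ^ 2 ≤ (x - a) * ∫ t in a..x, ‖u' t‖ ^ 2 := by
  have hu'x : ContinuousOn u' (Icc a x) := hu'.mono (Icc_subset_Icc_right hx.2)
  have hcs := integral_norm_mul_norm_le_sqrt_mul_sqrt hu'x.memLp_two_restrict_Ioc
    (continuousOn_const (c := (1 : 𝕜))).memLp_two_restrict_Ioc
  simp only [norm_one, mul_one, one_pow, integral_const, smul_eq_mul,
    measureReal_restrict_apply_univ, Real.volume_real_Ioc_of_le hx.1] at hcs
  have hnorm : ‖u x - u a‖ ≤ ∫ t in Ioc a x, ‖u' t‖ := by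
    rw [eq_add_integral_of_hasDerivWithinAt hab hu (hu'.intervalIntegrable_of_Icc hab) hx,
      add_sub_cancel_left, ← intervalIntegral.integral_of_le hx.1]
    exact intervalIntegral.norm_integral_le_integral_norm hx.1
  rw [intervalIntegral.integral_of_le hx.1]
  calc ‖u x - u a‖ ^ 2 ≤ (√(∫ t in Ioc a x, ‖u' t‖ ^ 2) * √(x - a)) ^ 2 := by
        gcongr; exact hnorm.trans hcs
    _ = _ := by
      rw [mul_pow, Real.sq_sqrt (setIntegral_nonneg measurableSet_Ioc fun t _ => sq_nonneg _),
        Real.sq_sqrt (sub_nonneg.2 hx.1), mul_comm]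

theorem integral_norm_sq_le_of_apply_left_eq_zero {u u' : ℝ → 𝕜} (hab : a ≤ b)
    (hu : ∀ x ∈ Icc a b, HasDerivWithinAt u (u' x) (Icc a b) x) (hu' : ContinuousOn u' (Icc a b))
    (ha : u a = 0) :
    ∫ x in a..b, ‖u x‖ ^ 2 ≤ (b - a) ^ 2 / 2 * ∫ x in a..b, ‖u' x‖ ^ 2 := by
  have huc : ContinuousOn u (Icc a b) := fun x hx => (hu x hx).continuousWithinAt
  set D := ∫ x in a..b, ‖u' x‖ ^ 2
  have hpointwise : ∀ x ∈ Icc a b, ‖u x‖ ^ 2 ≤ (x - a) * D := by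
    intro x hx
    have hD : ∫ t in a..x, ‖u' t‖ ^ 2 ≤ D :=
      intervalIntegral.integral_mono_interval le_rfl hx.1 hx.2
        (Filter.Eventually.of_forall fun t => sq_nonneg _)
        ((hu'.norm.pow 2).intervalIntegrable_of_Icc hab)
    simpa only [ha, sub_zero] using (norm_sub_sq_le_mul_integral_norm_sq hab hu hu' hx).trans
      (mul_le_mul_of_nonneg_left hD (sub_nonneg.2 hx.1))
  calc ∫ x in a..b, ‖u x‖ ^ 2 ≤ ∫ x in a..b, (x - a) * D :=
        intervalIntegral.integral_mono_on hab ((huc.norm.pow 2).intervalIntegrable_of_Icc hab)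
          ((by fun_prop : Continuous fun x : ℝ => (x - a) * D).intervalIntegrable _ _) hpointwise
    _ = (b - a) ^ 2 / 2 * D := by
      rw [intervalIntegral.integral_mul_const,
        intervalIntegral.integral_comp_sub_right (fun x => x), integral_id]
      ring

end Estimates

section OrrSommerfeld

variable {a b : ℝ}

/-- `(-d²/dx² + iβ(U + iλ))(-φ'' + α²φ) + iβU''φ` with `λ = μ + iν`, in terms of the given
derivatives `φ''` and `φ''''` of `φ`. -/
def orrSommerfeld (U U'' : ℝ → ℝ) (α β μ ν : ℝ) (φ φ'' φ'''' : ℝ → ℂ) (x : ℝ) : ℂ :=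
  φ'''' x - (α : ℂ) ^ 2 * φ'' x
    + Complex.I * (β : ℂ) * (((U x - ν : ℝ) : ℂ) + Complex.I * (μ : ℂ)) *
        (-(φ'' x) + (α : ℂ) ^ 2 * φ x)
    + Complex.I * (β : ℂ) * ((U'' x : ℝ) : ℂ) * φ x

theorem integral_star_mul_orrSommerfeld {U U'' : ℝ → ℝ} {φ φ'' φ'''' : ℝ → ℂ} (hab : a ≤ b)
    (hU : ContinuousOn U (Icc a b)) (hU'' : ContinuousOn U'' (Icc a b))
    (hφ : ContinuousOn φ (Icc a b)) (hφ'' : ContinuousOn φ'' (Icc a b))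
    (hφ'''' : IntervalIntegrable φ'''' volume a b) (α β μ ν : ℝ) :
    ∫ x in a..b, star (φ x) * orrSommerfeld U U'' α β μ ν φ φ'' φ'''' x
      = (∫ x in a..b, star (φ x) * φ'''' x) - (α : ℂ) ^ 2 * (∫ x in a..b, star (φ x) * φ'' x)
        + Complex.I * β * (-(∫ x in a..b, ((U x - ν : ℝ) : ℂ) * (star (φ x) * φ'' x))
          + (α : ℂ) ^ 2 * (∫ x in a..b, ((U x - ν : ℝ) : ℂ) * (star (φ x) * φ x))
          - Complex.I * μ * (∫ x in a..b, star (φ x) * φ'' x)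
          + Complex.I * μ * (α : ℂ) ^ 2 * (∫ x in a..b, star (φ x) * φ x)
          + (∫ x in a..b, (U'' x : ℂ) * (star (φ x) * φ x))) := by
  have hφφ'''' : IntervalIntegrable (fun x => star (φ x) * φ'''' x) volume a b :=
    hφ''''.continuousOn_mul (by rw [uIcc_of_le hab]; fun_prop)
  rw [intervalIntegral.integral_congr (g := fun x => star (φ x) * φ'''' x
    + (-(α : ℂ) ^ 2 * (star (φ x) * φ'' x)
      + Complex.I * β * (-(((U x - ν : ℝ) : ℂ) * (star (φ x) * φ'' x))
        + (α : ℂ) ^ 2 * (((U x - ν : ℝ) : ℂ) * (star (φ x) * φ x))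
        - Complex.I * μ * (star (φ x) * φ'' x)
        + Complex.I * μ * (α : ℂ) ^ 2 * (star (φ x) * φ x)
        + (U'' x : ℂ) * (star (φ x) * φ x)))) fun x _ => by simp only [orrSommerfeld]; ring]
  rw [intervalIntegral.integral_add hφφ''''
    (ContinuousOn.intervalIntegrable_of_Icc hab (by fun_prop))]
  simp (disch := exact ContinuousOn.intervalIntegrable_of_Icc hab (by fun_prop)) only
    [intervalIntegral.integral_add, intervalIntegral.integral_sub, intervalIntegral.integral_neg,
      intervalIntegral.integral_const_mul]
  ring

theorem im_integral_star_mul_orrSommerfeld {U U' U'' : ℝ → ℝ} {φ φ' φ'' φ''' φ'''' : ℝ → ℂ}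
    (hab : a ≤ b)
    (hU : ∀ x ∈ Icc a b, HasDerivWithinAt U (U' x) (Icc a b) x)
    (hU' : ∀ x ∈ Icc a b, HasDerivWithinAt U' (U'' x) (Icc a b) x)
    (hU'' : ContinuousOn U'' (Icc a b))
    (hφ : ∀ x ∈ Icc a b, HasDerivWithinAt φ (φ' x) (Icc a b) x)
    (hφ' : ∀ x ∈ Icc a b, HasDerivWithinAt φ' (φ'' x) (Icc a b) x)
    (hφ'' : ∀ x ∈ Icc a b, HasDerivWithinAt φ'' (φ''' x) (Icc a b) x)
    (hφ''' : ∀ x ∈ Icc a b, φ''' x = φ''' a + ∫ t in a..x, φ'''' t)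
    (hφ'''' : IntervalIntegrable φ'''' volume a b)
    (hφa : φ a = 0) (hφb : φ b = 0) (hφ'a : φ' a = 0) (hφ'b : φ' b = 0) (α β μ ν : ℝ) :
    (∫ x in a..b, star (φ x) * orrSommerfeld U U'' α β μ ν φ φ'' φ'''' x).im
      = β * ((∫ x in a..b, (U x - ν) * ‖φ' x‖ ^ 2) + α ^ 2 * (∫ x in a..b, (U x - ν) * ‖φ x‖ ^ 2)
        + (∫ x in a..b, U'' x * ‖φ x‖ ^ 2) / 2) := by
  have hUc : ContinuousOn U (Icc a b) := fun x hx => (hU x hx).continuousWithinAt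
  have hU'c : ContinuousOn U' (Icc a b) := fun x hx => (hU' x hx).continuousWithinAt
  have hφc : ContinuousOn φ (Icc a b) := fun x hx => (hφ x hx).continuousWithinAt
  have hφ'c : ContinuousOn φ' (Icc a b) := fun x hx => (hφ' x hx).continuousWithinAt
  have hφ''c : ContinuousOn φ'' (Icc a b) := fun x hx => (hφ'' x hx).continuousWithinAt
  have hφ_φ'' := integral_star_mul_deriv_deriv hab hφ hφ' hφ''c
  have hUφ_φ'' := integral_ofReal_mul_star_mul_deriv_deriv hab
    (fun x hx => (hU x hx).sub_const ν) hφ hφ' hU'c hφ''c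
  have hre := two_mul_re_integral_ofReal_mul_star_mul_deriv hab hU' hφ hU'' hφ'c
  simp only [hφa, hφb, norm_zero, zero_pow two_ne_zero, mul_zero, sub_zero, zero_sub] at hre
  rw [integral_star_mul_orrSommerfeld hab hUc hU'' hφc hφ''c hφ'''' α β μ ν,
    integral_star_mul_fourth_deriv hab hφ hφ' hφ'' hφ''' hφ'''' hφa hφb hφ'a hφ'b,
    hφ_φ'', hUφ_φ'', integral_ofReal_mul_star_mul_self, integral_star_mul_self,
    integral_ofReal_mul_star_mul_self]
  simp only [hφ'a, hφ'b, mul_zero, sub_zero, ← Complex.ofReal_pow, Complex.add_im, Complex.sub_im,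
    Complex.neg_im, Complex.mul_im, Complex.add_re, Complex.sub_re, Complex.neg_re, Complex.mul_re,
    Complex.I_re, Complex.I_im, Complex.ofReal_re, Complex.ofReal_im, Complex.zero_re,
    Complex.zero_im]
  linear_combination β / 2 * hre

theorem orrSommerfeld_coercive {U U' U'' : ℝ → ℝ} {φ φ' φ'' φ''' φ'''' : ℝ → ℂ}
    (hab : a ≤ b)
    (hU : ∀ x ∈ Icc a b, HasDerivWithinAt U (U' x) (Icc a b) x)
    (hU' : ∀ x ∈ Icc a b, HasDerivWithinAt U' (U'' x) (Icc a b) x)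
    (hU'' : ContinuousOn U'' (Icc a b))
    (hφ : ∀ x ∈ Icc a b, HasDerivWithinAt φ (φ' x) (Icc a b) x)
    (hφ' : ∀ x ∈ Icc a b, HasDerivWithinAt φ' (φ'' x) (Icc a b) x)
    (hφ'' : ∀ x ∈ Icc a b, HasDerivWithinAt φ'' (φ''' x) (Icc a b) x)
    (hφ''' : ∀ x ∈ Icc a b, φ''' x = φ''' a + ∫ t in a..x, φ'''' t)
    (hφ'''' : IntervalIntegrable φ'''' volume a b)
    (hφa : φ a = 0) (hφb : φ b = 0) (hφ'a : φ' a = 0) (hφ'b : φ' b = 0)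
    {MU MU2 : ℝ} (hMU : ∀ x ∈ Icc a b, |U x| ≤ MU) (hMU2 : ∀ x ∈ Icc a b, |U'' x| ≤ MU2)
    {α β μ ν : ℝ} (hβ : 0 ≤ β) (hν : 2 * (MU + (b - a) ^ 2 / 4 * MU2) ≤ ν) :
    β * ν / 2 * ((∫ x in a..b, ‖φ' x‖ ^ 2) + α ^ 2 * ∫ x in a..b, ‖φ x‖ ^ 2)
      ≤ -(∫ x in a..b, star (φ x) * orrSommerfeld U U'' α β μ ν φ φ'' φ'''' x).im := by
  have hUc : ContinuousOn U (Icc a b) := fun x hx => (hU x hx).continuousWithinAt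
  have hφc : ContinuousOn φ (Icc a b) := fun x hx => (hφ x hx).continuousWithinAt
  have hφ'c : ContinuousOn φ' (Icc a b) := fun x hx => (hφ' x hx).continuousWithinAt
  have hUν : ∀ x ∈ Icc a b, U x - ν ≤ MU - ν := fun x hx => by linarith [(abs_le.1 (hMU x hx)).2]
  have hUνc : ContinuousOn (fun x => U x - ν) (Icc a b) := by fun_prop
  have hA := integral_mul_norm_sq_le_of_le hab hUνc hφ'c hUν
  have hB := integral_mul_norm_sq_le_of_le hab hUνc hφc hUν
  have hC := integral_mul_norm_sq_le_of_le hab hU'' hφc fun x hx => (abs_le.1 (hMU2 x hx)).2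
  have hP := integral_norm_sq_le_of_apply_left_eq_zero hab hφ hφ'c hφa
  have hMU2_nonneg : 0 ≤ MU2 := (abs_nonneg _).trans (hMU2 a (left_mem_Icc.2 hab))
  have hD_nonneg : 0 ≤ ∫ x in a..b, ‖φ' x‖ ^ 2 :=
    intervalIntegral.integral_nonneg hab fun x _ => sq_nonneg _
  have hP_nonneg : 0 ≤ ∫ x in a..b, ‖φ x‖ ^ 2 :=
    intervalIntegral.integral_nonneg hab fun x _ => sq_nonneg _
  have hαB := mul_le_mul_of_nonneg_left hB (sq_nonneg α)
  have hCD := mul_le_mul_of_nonneg_left hP hMU2_nonneg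
  have hDcoef : (MU + (b - a) ^ 2 / 4 * MU2 - ν / 2) * ∫ x in a..b, ‖φ' x‖ ^ 2 ≤ 0 :=
    mul_nonpos_of_nonpos_of_nonneg (by linarith) hD_nonneg
  have hPcoef : (MU - ν / 2) * (α ^ 2 * ∫ x in a..b, ‖φ x‖ ^ 2) ≤ 0 :=
    mul_nonpos_of_nonpos_of_nonneg (by nlinarith [sq_nonneg (b - a)])
      (mul_nonneg (sq_nonneg α) hP_nonneg)
  have key : ν / 2 * ((∫ x in a..b, ‖φ' x‖ ^ 2) + α ^ 2 * ∫ x in a..b, ‖φ x‖ ^ 2)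
      + ((∫ x in a..b, (U x - ν) * ‖φ' x‖ ^ 2) + α ^ 2 * (∫ x in a..b, (U x - ν) * ‖φ x‖ ^ 2)
        + (∫ x in a..b, U'' x * ‖φ x‖ ^ 2) / 2) ≤ 0 := by
    linarith
  rw [im_integral_star_mul_orrSommerfeld hab hU hU' hU'' hφ hφ' hφ'' hφ''' hφ'''' hφa hφb hφ'a hφ'b]
  linarith [mul_nonpos_of_nonneg_of_nonpos hβ key]

end OrrSommerfeld

theorem stmt10_general (U U1 U2 : ℝ → ℝ)
    (hU : ∀ x ∈ Set.Icc (-1:ℝ) 1, HasDerivWithinAt U (U1 x) (Set.Icc (-1:ℝ) 1) x)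
    (hU1 : ∀ x ∈ Set.Icc (-1:ℝ) 1, HasDerivWithinAt U1 (U2 x) (Set.Icc (-1:ℝ) 1) x)
    (hU2c : ContinuousOn U2 (Set.Icc (-1:ℝ) 1))
    (MU MU2 : ℝ)
    (hMU : ∀ x ∈ Set.Icc (-1:ℝ) 1, |U x| ≤ MU)
    (hMU2 : ∀ x ∈ Set.Icc (-1:ℝ) 1, |U2 x| ≤ MU2)
    (α β μ ν : ℝ) (hβ : 0 < β)
    (hν : 2 * (MU + MU2 + 1) ≤ ν)
    (φ d1 d2 d3 d4 f : ℝ → ℂ)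
    (hd1 : ∀ x ∈ Set.Icc (-1:ℝ) 1, HasDerivWithinAt φ (d1 x) (Set.Icc (-1:ℝ) 1) x)
    (hd2 : ∀ x ∈ Set.Icc (-1:ℝ) 1, HasDerivWithinAt d1 (d2 x) (Set.Icc (-1:ℝ) 1) x)
    (hd3 : ∀ x ∈ Set.Icc (-1:ℝ) 1, HasDerivWithinAt d2 (d3 x) (Set.Icc (-1:ℝ) 1) x)
    (hd4FTC : ∀ x ∈ Set.Icc (-1:ℝ) 1, d3 x = d3 (-1) + ∫ t in (-1:ℝ)..x, d4 t)
    (hd4i : IntervalIntegrable d4 MeasureTheory.volume (-1) 1)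
    (hf : MeasureTheory.MemLp f 2 (MeasureTheory.volume.restrict (Set.Ioo (-1:ℝ) 1)))
    (hbφm : φ (-1) = 0) (hbφp : φ 1 = 0) (hbd1m : d1 (-1) = 0) (hbd1p : d1 1 = 0)
    (heq : ∀ᵐ x ∂(MeasureTheory.volume.restrict (Set.Ioo (-1:ℝ) 1)),
      d4 x - (α : ℂ) ^ 2 * d2 x
        + Complex.I * (β : ℂ) * (((U x - ν : ℝ) : ℂ) + Complex.I * (μ : ℂ)) *
            (-(d2 x) + (α : ℂ) ^ 2 * φ x)
        + Complex.I * (β : ℂ) * ((U2 x : ℝ) : ℂ) * φ x = f x) :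
    (∫ x in (-1:ℝ)..1, ‖d1 x‖ ^ 2) + α ^ 2 * ∫ x in (-1:ℝ)..1, ‖φ x‖ ^ 2
      ≤ (2 / (β * ν)) * Real.sqrt (∫ x in (-1:ℝ)..1, ‖φ x‖ ^ 2) *
          Real.sqrt (∫ x in (-1:ℝ)..1, ‖f x‖ ^ 2) := by
  have hab : (-1 : ℝ) ≤ 1 := by norm_num
  have hIoc : volume.restrict (Ioo (-1 : ℝ) 1) = volume.restrict (Ioc (-1) 1) :=
    Measure.restrict_congr_set Ioo_ae_eq_Ioc
  have hpair : ∫ x in (-1 : ℝ)..1, star (φ x) * f x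
      = ∫ x in (-1 : ℝ)..1, star (φ x) * orrSommerfeld U U2 α β μ ν φ d2 d4 x := by
    rw [hIoc] at heq
    refine intervalIntegral.integral_congr_ae ?_
    filter_upwards [ae_imp_of_ae_restrict heq] with x hx hxI
    rw [← hx (by rwa [uIoc_of_le hab] at hxI)]
    rfl
  have hMU_nonneg : 0 ≤ MU := (abs_nonneg _).trans (hMU 0 (by norm_num))
  have hMU2_nonneg : 0 ≤ MU2 := (abs_nonneg _).trans (hMU2 0 (by norm_num))
  have hcoercive := orrSommerfeld_coercive hab hU hU1 hU2c hd1 hd2 hd3 hd4FTC hd4i hbφm hbφp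
    hbd1m hbd1p hMU hMU2 (α := α) (μ := μ) hβ.le (by norm_num; linarith)
  have hcs := norm_integral_star_mul_le hab
    (ContinuousOn.memLp_two_restrict_Ioc fun x hx => (hd1 x hx).continuousWithinAt) (hIoc ▸ hf)
  rw [← hpair] at hcoercive
  have him := (neg_le_abs _).trans (Complex.abs_im_le_norm (∫ x in (-1 : ℝ)..1, star (φ x) * f x))
  have hβν : 0 < β * ν := mul_pos hβ (by linarith)
  rw [div_mul_eq_mul_div, div_mul_eq_mul_div, le_div_iff₀ hβν]
  linarith

/-- resolvent estimate for the Orr–Sommerfeld operator in the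
regime of large `Im λ`.  `U ∈ C²([-1,1])`, `α ≥ 0`, `β > 0`, `λ = μ + iν` with
`ν ≥ 2(‖U‖_∞ + ‖U''‖_∞ + 1)` and `|μ| ≤ ν`.  `φ ∈ H⁴(-1,1)` with
`φ(±1) = φ'(±1) = 0` (encoded via derivatives `d1, d2, d3` and `d4 = φ'''' ∈ L²`)
satisfies `(-d²/dx² + iβ(U+iλ))(-φ'' + α²φ) + iβU''φ = f` a.e.; then
`‖φ'‖² + α²‖φ‖² ≤ (2/(βν))‖φ‖_{L²}‖f‖_{L²}`. -/
theorem stmt10 (U U1 U2 : ℝ → ℝ)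
    (hU : ∀ x ∈ Set.Icc (-1:ℝ) 1, HasDerivWithinAt U (U1 x) (Set.Icc (-1:ℝ) 1) x)
    (hU1 : ∀ x ∈ Set.Icc (-1:ℝ) 1, HasDerivWithinAt U1 (U2 x) (Set.Icc (-1:ℝ) 1) x)
    (hU2c : ContinuousOn U2 (Set.Icc (-1:ℝ) 1))
    (MU MU2 : ℝ)
    (hMU : ∀ x ∈ Set.Icc (-1:ℝ) 1, |U x| ≤ MU)
    (hMU2 : ∀ x ∈ Set.Icc (-1:ℝ) 1, |U2 x| ≤ MU2)
    (α β μ ν : ℝ) (hα : 0 ≤ α) (hβ : 0 < β)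
    (hν : 2 * (MU + MU2 + 1) ≤ ν) (hμ : |μ| ≤ ν)
    (φ d1 d2 d3 d4 f : ℝ → ℂ)
    (hd1 : ∀ x ∈ Set.Icc (-1:ℝ) 1, HasDerivWithinAt φ (d1 x) (Set.Icc (-1:ℝ) 1) x)
    (hd2 : ∀ x ∈ Set.Icc (-1:ℝ) 1, HasDerivWithinAt d1 (d2 x) (Set.Icc (-1:ℝ) 1) x)
    (hd3 : ∀ x ∈ Set.Icc (-1:ℝ) 1, HasDerivWithinAt d2 (d3 x) (Set.Icc (-1:ℝ) 1) x)
    (hd4FTC : ∀ x ∈ Set.Icc (-1:ℝ) 1, d3 x = d3 (-1) + ∫ t in (-1:ℝ)..x, d4 t)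
    (hd4 : MeasureTheory.MemLp d4 2 (MeasureTheory.volume.restrict (Set.Ioo (-1:ℝ) 1)))
    (hd4i : IntervalIntegrable d4 MeasureTheory.volume (-1) 1)
    (hf : MeasureTheory.MemLp f 2 (MeasureTheory.volume.restrict (Set.Ioo (-1:ℝ) 1)))
    (hbφm : φ (-1) = 0) (hbφp : φ 1 = 0) (hbd1m : d1 (-1) = 0) (hbd1p : d1 1 = 0)
    (heq : ∀ᵐ x ∂(MeasureTheory.volume.restrict (Set.Ioo (-1:ℝ) 1)),
      d4 x - (α : ℂ) ^ 2 * d2 x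
        + Complex.I * (β : ℂ) * (((U x - ν : ℝ) : ℂ) + Complex.I * (μ : ℂ)) *
            (-(d2 x) + (α : ℂ) ^ 2 * φ x)
        + Complex.I * (β : ℂ) * ((U2 x : ℝ) : ℂ) * φ x = f x) :
    (∫ x in (-1:ℝ)..1, ‖d1 x‖ ^ 2) + α ^ 2 * ∫ x in (-1:ℝ)..1, ‖φ x‖ ^ 2
      ≤ (2 / (β * ν)) * Real.sqrt (∫ x in (-1:ℝ)..1, ‖φ x‖ ^ 2) *
          Real.sqrt (∫ x in (-1:ℝ)..1, ‖f x‖ ^ 2) :=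
  stmt10_general U U1 U2 hU hU1 hU2c MU MU2 hMU hMU2 α β μ ν hβ hν φ d1 d2 d3 d4 f hd1 hd2 hd3
    hd4FTC hd4i hf hbφm hbφp hbd1m hbd1p heq
end

section
/- Let $U \in C^1([-1,1])$ be real-valued, let $\alpha \geq 0$, $\beta > 0$, and $\lambda = \mu + i\nu$ with $\mu \leq -2(\|U'\|_\infty^2 + \|U\|_\infty + 1)$. If $\phi \in H^4(-1,1)$ with $\phi(\pm 1) = \phi'(\pm 1) = 0$ satisfies $\big(-\tfrac{d^2}{dx^2} + i\beta(U + i\lambda)\big)(-\phi'' + \alpha^2\phi) + i\beta U'' \phi = f$, then $\|\phi'\|_{L^2}^2 + \alpha^2\|\phi\|_{L^2}^2 \leq \frac{2}{\beta|\mu|}\|\phi\|_{L^2}\|f\|_{L^2}$. -/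
/-!
Pair the equation with `φ` in `L²(-1,1)` and take real parts. Integrating by parts (twice for the
fourth-order term, using only `φ(±1) = φ'(±1) = 0`), the real part of `⟨φ, f⟩` equals
`‖φ''‖² + α²‖φ'‖² + β|μ|(‖φ'‖² + α²‖φ‖²) - β Im⟨U'φ, φ'⟩`: the multiplications by `iβ(U - ν)`
and `iβU''` are skew-adjoint, and the only trace they leave is the commutator term `U'φ`. That
term is at most `β‖U'‖_∞‖φ‖‖φ'‖ ≤ 2β‖U'‖_∞‖φ'‖²` by the Poincaré inequality `‖φ‖ ≤ 2‖φ'‖`, so the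
choice of `μ` lets it be absorbed by half of `β|μ|‖φ'‖²`; Cauchy–Schwarz bounds `Re⟨φ, f⟩`.
-/

open MeasureTheory Set
open scoped ComplexConjugate

section Calculus

variable {a b : ℝ}

theorem integral_eq_sub_of_hasDerivWithinAt_Icc {E : Type*} [NormedAddCommGroup E]
    [NormedSpace ℝ E] [CompleteSpace E] {u u' : ℝ → E} {c d : ℝ}
    (hu : ∀ x ∈ Icc a b, HasDerivWithinAt u (u' x) (Icc a b) x)
    (hu' : IntervalIntegrable u' volume a b) (hac : a ≤ c) (hcd : c ≤ d) (hdb : d ≤ b) :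
    ∫ x in c..d, u' x = u d - u c := by
  have hsub : Icc c d ⊆ Icc a b := Icc_subset_Icc hac hdb
  refine intervalIntegral.integral_eq_sub_of_hasDerivAt_of_le hcd
    (fun x hx => (hu x (hsub hx)).continuousWithinAt.mono hsub)
    (fun x hx => ((hu x (hsub (Ioo_subset_Icc_self hx))).mono hsub).hasDerivAt
      (Icc_mem_nhds hx.1 hx.2))
    (hu'.mono_set ?_)
  rw [uIcc_of_le hcd, uIcc_of_le (hac.trans (hcd.trans hdb))]
  exact hsub

theorem ContinuousOn.memLp_restrict_Ioc {E : Type*} [NormedAddCommGroup E] {g : ℝ → E}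
    {p : ENNReal} (hg : ContinuousOn g (Icc a b)) : MemLp g p (volume.restrict (Ioc a b)) := by
  obtain ⟨C, hC⟩ := isCompact_Icc.exists_bound_of_continuousOn hg
  refine MemLp.of_bound ((hg.mono Ioc_subset_Icc_self).aestronglyMeasurable measurableSet_Ioc) C ?_
  filter_upwards [ae_restrict_mem measurableSet_Ioc] with x hx
  exact hC x (Ioc_subset_Icc_self hx)

theorem IntervalIntegrable.re {f : ℝ → ℂ} {μ : Measure ℝ} (hf : IntervalIntegrable f μ a b) :
    IntervalIntegrable (fun x => (f x).re) μ a b :=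
  ⟨hf.1.re, hf.2.re⟩

theorem intervalIntegral.integral_norm_mul_norm_le {E F : Type*} [NormedAddCommGroup E]
    [NormedAddCommGroup F] {g : ℝ → E} {h : ℝ → F} (hab : a ≤ b)
    (hg : MemLp g 2 (volume.restrict (Ioc a b))) (hh : MemLp h 2 (volume.restrict (Ioc a b))) :
    ∫ x in a..b, ‖g x‖ * ‖h x‖
      ≤ √(∫ x in a..b, ‖g x‖ ^ 2) * √(∫ x in a..b, ‖h x‖ ^ 2) := by
  have h2 : ENNReal.ofReal 2 = 2 := by norm_num
  have key := integral_mul_norm_le_Lp_mul_Lq Real.HolderConjugate.two_two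
    (h2 ▸ hg.norm) (h2 ▸ hh.norm)
  simp only [intervalIntegral.integral_of_le hab, Real.sqrt_eq_rpow, ← Real.rpow_natCast]
  simpa using key

theorem ContinuousOn.of_eq_add_primitive {E : Type*} [NormedAddCommGroup E] [NormedSpace ℝ E]
    [CompleteSpace E] {w g : ℝ → E} (hab : a ≤ b) (hg : IntervalIntegrable g volume a b)
    (hw : ∀ x ∈ Icc a b, w x = w a + ∫ t in a..x, g t) : ContinuousOn w (Icc a b) := by
  have hprim := intervalIntegral.continuousOn_primitive_interval' hg left_mem_uIcc
  rw [uIcc_of_le hab] at hprim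
  exact (continuousOn_const.add hprim).congr hw

theorem HasDerivWithinAt.conj {u : ℝ → ℂ} {u' : ℂ} {s : Set ℝ} {x : ℝ}
    (h : HasDerivWithinAt u u' s x) : HasDerivWithinAt (fun x => conj (u x)) (conj u') s x :=
  h.star

theorem integral_complex_re {f : ℝ → ℂ} (hf : IntervalIntegrable f volume a b) :
    ∫ x in a..b, (f x).re = (∫ x in a..b, f x).re :=
  intervalIntegral.intervalIntegral_re hf

theorem integral_complex_im {f : ℝ → ℂ} (hf : IntervalIntegrable f volume a b) :
    ∫ x in a..b, (f x).im = (∫ x in a..b, f x).im :=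
  intervalIntegral.intervalIntegral_im hf

end Calculus

section IntegrationByParts

variable {a b : ℝ}

theorem integral_mul_deriv_eq_neg_of_eq_zero {A : Type*} [NormedRing A] [NormedAlgebra ℝ A]
    [CompleteSpace A] {u u' v v' : ℝ → A} (hab : a ≤ b)
    (hu : ∀ x ∈ Icc a b, HasDerivWithinAt u (u' x) (Icc a b) x)
    (hv : ∀ x ∈ Icc a b, HasDerivWithinAt v (v' x) (Icc a b) x)
    (hu' : IntervalIntegrable u' volume a b) (hv' : IntervalIntegrable v' volume a b)
    (hua : u a = 0) (hub : u b = 0) :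
    ∫ x in a..b, u x * v' x = -∫ x in a..b, u' x * v x := by
  rw [← uIcc_of_le hab] at hu hv
  rw [intervalIntegral.integral_mul_deriv_eq_deriv_mul_of_hasDerivWithinAt hu hv hu' hv', hua,
    hub, zero_mul, zero_mul, sub_zero, zero_sub]

-- The diagonal `x = t` is excluded on the right, which matters when `μ` has atoms.
theorem setIntegral_Ioc_integral_mul_swap {𝕜 : Type*} [RCLike 𝕜] {μ : Measure ℝ} [SFinite μ]
    {g h : ℝ → 𝕜} (hg : IntegrableOn g (Ioc a b) μ) (hh : IntegrableOn h (Ioc a b) μ) :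
    ∫ x in Ioc a b, (∫ t in Ioc x b, h t ∂μ) * g x ∂μ
      = ∫ t in Ioc a b, h t * ∫ x in Ioo a t, g x ∂μ ∂μ := by
  let F : ℝ → ℝ → 𝕜 := fun x t => {q : ℝ × ℝ | q.1 < q.2}.indicator (fun q => h q.2 * g q.1) (x, t)
  have hF : Integrable (Function.uncurry F) ((μ.restrict (Ioc a b)).prod (μ.restrict (Ioc a b))) :=
    ((hg.mul_prod hh).indicator (measurableSet_lt measurable_fst measurable_snd)).congr
      (.of_forall fun q => by simp only [Function.uncurry, F, indicator_apply, mul_comm])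
  have hslice_left : ∀ x ∈ Ioc a b,
      ∫ t in Ioc a b, F x t ∂μ = (∫ t in Ioc x b, h t ∂μ) * g x := by
    intro x hx
    have hset : Ioi x ∩ Ioc a b = Ioc x b := by
      ext t; simp only [mem_inter_iff, mem_Ioi, mem_Ioc]
      exact ⟨fun h => ⟨h.1, h.2.2⟩, fun h => ⟨h.1, hx.1.trans h.1, h.2⟩⟩
    have : ∀ t, F x t = (Ioi x).indicator (fun t => h t * g x) t := fun t => by
      simp [F, indicator_apply]
    simp only [this, integral_indicator measurableSet_Ioi,
      Measure.restrict_restrict measurableSet_Ioi, hset, integral_mul_const]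
  have hslice_right : ∀ t ∈ Ioc a b,
      ∫ x in Ioc a b, F x t ∂μ = h t * ∫ x in Ioo a t, g x ∂μ := by
    intro t ht
    have hset : Iio t ∩ Ioc a b = Ioo a t := by
      ext x; simp only [mem_inter_iff, mem_Iio, mem_Ioc, mem_Ioo]
      exact ⟨fun h => ⟨h.2.1, h.1⟩, fun h => ⟨h.2, h.1, h.2.le.trans ht.2⟩⟩
    have : ∀ x, F x t = (Iio t).indicator (fun x => h t * g x) x := fun x => by
      simp [F, indicator_apply]
    simp only [this, integral_indicator measurableSet_Iio,
      Measure.restrict_restrict measurableSet_Iio, hset, integral_const_mul]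
  rw [← setIntegral_congr_fun measurableSet_Ioc hslice_left,
    ← setIntegral_congr_fun measurableSet_Ioc hslice_right]
  exact integral_integral_swap hF

theorem integral_mul_eq_neg_integral_deriv_mul_of_primitive {𝕜 : Type*} [RCLike 𝕜]
    {u u' g w : ℝ → 𝕜} (hab : a ≤ b)
    (hu : ∀ x ∈ Icc a b, HasDerivWithinAt u (u' x) (Icc a b) x)
    (hu' : IntervalIntegrable u' volume a b) (hg : IntervalIntegrable g volume a b)
    (hw : ∀ x ∈ Icc a b, w x = w a + ∫ t in a..x, g t) (hua : u a = 0) (hub : u b = 0) :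
    ∫ x in a..b, u x * g x = -∫ x in a..b, u' x * w x := by
  have htail : ∀ x ∈ Ioc a b, u x = -∫ t in Ioc x b, u' t := fun x hx => by
    rw [← intervalIntegral.integral_of_le hx.2,
      integral_eq_sub_of_hasDerivWithinAt_Icc hu hu' hx.1.le hx.2 le_rfl, hub, zero_sub, neg_neg]
  have hu'_zero : ∫ x in a..b, u' x = 0 := by
    rw [integral_eq_sub_of_hasDerivWithinAt_Icc hu hu' le_rfl hab le_rfl, hua, hub, sub_zero]
  have hw_cont : ContinuousOn w (uIcc a b) := by
    rw [uIcc_of_le hab]; exact ContinuousOn.of_eq_add_primitive hab hg hw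
  calc ∫ x in a..b, u x * g x = ∫ x in Ioc a b, -((∫ t in Ioc x b, u' t) * g x) := by
        rw [intervalIntegral.integral_of_le hab]
        exact setIntegral_congr_fun measurableSet_Ioc fun x hx => by rw [htail x hx, neg_mul]
    _ = -∫ t in Ioc a b, u' t * ∫ x in Ioo a t, g x := by
        rw [integral_neg, setIntegral_Ioc_integral_mul_swap hg.1 hu'.1]
    _ = -∫ t in Ioc a b, u' t * (w t - w a) := by
        refine congrArg Neg.neg (setIntegral_congr_fun measurableSet_Ioc fun t ht => ?_)
        rw [hw t (Ioc_subset_Icc_self ht), add_sub_cancel_left,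
          intervalIntegral.integral_of_le ht.1.le, integral_Ioc_eq_integral_Ioo]
    _ = -∫ x in a..b, u' x * w x := by
        rw [← intervalIntegral.integral_of_le hab]
        simp only [mul_sub]
        rw [intervalIntegral.integral_sub (hu'.mul_continuousOn hw_cont) (hu'.mul_const _),
          intervalIntegral.integral_mul_const, hu'_zero, zero_mul, sub_zero]

end IntegrationByParts

section Energy

variable {a b : ℝ} {φ d1 d2 d3 d4 : ℝ → ℂ}

theorem integral_conj_mul_deriv_deriv {u u' u'' : ℝ → ℂ} (hab : a ≤ b)
    (hu : ∀ x ∈ Icc a b, HasDerivWithinAt u (u' x) (Icc a b) x)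
    (hu' : ∀ x ∈ Icc a b, HasDerivWithinAt u' (u'' x) (Icc a b) x)
    (hu'' : IntervalIntegrable u'' volume a b) (hua : u a = 0) (hub : u b = 0) :
    ∫ x in a..b, conj (u x) * u'' x = -∫ x in a..b, conj (u' x) * u' x := by
  have hcont : ContinuousOn (fun x => conj (u' x)) (Icc a b) :=
    Complex.continuous_conj.comp_continuousOn fun x hx => (hu' x hx).continuousWithinAt
  exact integral_mul_deriv_eq_neg_of_eq_zero hab (fun x hx => (hu x hx).conj) hu'
    (hcont.intervalIntegrable_of_Icc hab) hu'' (by simp [hua]) (by simp [hub])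

theorem re_integral_conj_mul_self (v : ℝ → ℂ) :
    (∫ x in a..b, conj (v x) * v x).re = ∫ x in a..b, ‖v x‖ ^ 2 := by
  simp_rw [Complex.conj_mul', ← Complex.ofReal_pow, intervalIntegral.integral_ofReal,
    Complex.ofReal_re]

theorem integral_re_conj_mul_second_deriv (hab : a ≤ b)
    (hφ : ∀ x ∈ Icc a b, HasDerivWithinAt φ (d1 x) (Icc a b) x)
    (hd1 : ∀ x ∈ Icc a b, HasDerivWithinAt d1 (d2 x) (Icc a b) x)
    (hd2 : ContinuousOn d2 (Icc a b)) (hφa : φ a = 0) (hφb : φ b = 0) :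
    ∫ x in a..b, (conj (φ x) * d2 x).re = -∫ x in a..b, ‖d1 x‖ ^ 2 := by
  have hint : IntervalIntegrable (fun x => conj (φ x) * d2 x) volume a b :=
    ContinuousOn.intervalIntegrable_of_Icc hab <|
      (Complex.continuous_conj.comp_continuousOn fun x hx => (hφ x hx).continuousWithinAt).mul hd2
  rw [integral_complex_re hint, integral_conj_mul_deriv_deriv hab hφ hd1
    (hd2.intervalIntegrable_of_Icc hab) hφa hφb, Complex.neg_re, re_integral_conj_mul_self]

theorem integral_re_conj_mul_fourth_deriv (hab : a ≤ b)
    (hφ : ∀ x ∈ Icc a b, HasDerivWithinAt φ (d1 x) (Icc a b) x)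
    (hd1 : ∀ x ∈ Icc a b, HasDerivWithinAt d1 (d2 x) (Icc a b) x)
    (hd2 : ∀ x ∈ Icc a b, HasDerivWithinAt d2 (d3 x) (Icc a b) x)
    (hd3 : ∀ x ∈ Icc a b, d3 x = d3 a + ∫ t in a..x, d4 t) (hd4 : IntervalIntegrable d4 volume a b)
    (hφa : φ a = 0) (hφb : φ b = 0) (hd1a : d1 a = 0) (hd1b : d1 b = 0) :
    ∫ x in a..b, (conj (φ x) * d4 x).re = ∫ x in a..b, ‖d2 x‖ ^ 2 := by
  have hcφ : ContinuousOn (fun x => conj (φ x)) (Icc a b) :=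
    Complex.continuous_conj.comp_continuousOn fun x hx => (hφ x hx).continuousWithinAt
  have hcd1 : ContinuousOn (fun x => conj (d1 x)) (Icc a b) :=
    Complex.continuous_conj.comp_continuousOn fun x hx => (hd1 x hx).continuousWithinAt
  rw [integral_complex_re (hd4.continuousOn_mul (by rwa [uIcc_of_le hab])),
    integral_mul_eq_neg_integral_deriv_mul_of_primitive hab (fun x hx => (hφ x hx).conj)
      (hcd1.intervalIntegrable_of_Icc hab) hd4 hd3 (by simp [hφa]) (by simp [hφb]),
    integral_conj_mul_deriv_deriv hab hd1 hd2
      ((ContinuousOn.of_eq_add_primitive hab hd4 hd3).intervalIntegrable_of_Icc hab) hd1a hd1b,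
    neg_neg, re_integral_conj_mul_self]

theorem integral_mul_im_conj_mul_second_deriv {V V' : ℝ → ℝ} (hab : a ≤ b)
    (hV : ∀ x ∈ Icc a b, HasDerivWithinAt V (V' x) (Icc a b) x) (hV' : ContinuousOn V' (Icc a b))
    (hφ : ∀ x ∈ Icc a b, HasDerivWithinAt φ (d1 x) (Icc a b) x)
    (hd1 : ∀ x ∈ Icc a b, HasDerivWithinAt d1 (d2 x) (Icc a b) x)
    (hd2 : ContinuousOn d2 (Icc a b)) (hφa : φ a = 0) (hφb : φ b = 0) :
    ∫ x in a..b, V x * (conj (φ x) * d2 x).im = -∫ x in a..b, V' x * (conj (φ x) * d1 x).im := by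
  have cV : ContinuousOn V (Icc a b) := fun x hx => (hV x hx).continuousWithinAt
  have cφ : ContinuousOn φ (Icc a b) := fun x hx => (hφ x hx).continuousWithinAt
  have cd1 : ContinuousOn d1 (Icc a b) := fun x hx => (hd1 x hx).continuousWithinAt
  have ibp := integral_mul_deriv_eq_neg_of_eq_zero hab
    (u := fun x => (V x : ℂ) * conj (φ x))
    (u' := fun x => (V' x : ℂ) * conj (φ x) + V x * conj (d1 x))
    (fun x hx => (hV x hx).ofReal_comp.mul (hφ x hx).conj) hd1
    (ContinuousOn.intervalIntegrable_of_Icc hab (by fun_prop)) (hd2.intervalIntegrable_of_Icc hab)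
    (by simp [hφa]) (by simp [hφb])
  calc ∫ x in a..b, V x * (conj (φ x) * d2 x).im
      = (∫ x in a..b, (V x : ℂ) * conj (φ x) * d2 x).im := by
        rw [← integral_complex_im (ContinuousOn.intervalIntegrable_of_Icc hab (by fun_prop))]
        simp only [mul_assoc, Complex.im_ofReal_mul]
    _ = -(∫ x in a..b, ((V' x : ℂ) * conj (φ x) + V x * conj (d1 x)) * d1 x).im := by
        rw [ibp, Complex.neg_im]
    _ = -∫ x in a..b, V' x * (conj (φ x) * d1 x).im := by
        rw [← integral_complex_im (ContinuousOn.intervalIntegrable_of_Icc hab (by fun_prop))]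
        congr 1
        refine intervalIntegral.integral_congr fun x _ => ?_
        simp only [add_mul, mul_assoc, Complex.add_im, Complex.im_ofReal_mul, Complex.conj_mul',
          ← Complex.ofReal_pow, Complex.ofReal_im, mul_zero, add_zero]

end Energy

theorem re_conj_mul_orrSommerfeld (p p2 p4 : ℂ) (α β μ u w : ℝ) :
    (conj p * (p4 - (α : ℂ) ^ 2 * p2 + Complex.I * (β : ℂ) * ((u : ℂ) + Complex.I * (μ : ℂ)) *
        (-p2 + (α : ℂ) ^ 2 * p) + Complex.I * (β : ℂ) * (w : ℂ) * p)).re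
      = (conj p * p4).re + (β * μ - α ^ 2) * (conj p * p2).re - α ^ 2 * β * μ * ‖p‖ ^ 2
        + β * (u * (conj p * p2).im) := by
  rw [Complex.sq_norm, Complex.normSq_apply]
  simp only [Complex.mul_re, Complex.mul_im, Complex.add_re,
    Complex.add_im, Complex.sub_re, Complex.sub_im, Complex.neg_re, Complex.neg_im, Complex.conj_re,
    Complex.conj_im, Complex.I_re, Complex.I_im, Complex.ofReal_re, Complex.ofReal_im, sq]
  ring

theorem integral_re_conj_mul_orrSommerfeld {a b : ℝ} {U U1 U2 : ℝ → ℝ} {φ d1 d2 d3 d4 f : ℝ → ℂ}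
    {α β μ ν : ℝ} (hab : a ≤ b)
    (hU : ∀ x ∈ Icc a b, HasDerivWithinAt U (U1 x) (Icc a b) x) (hU1 : ContinuousOn U1 (Icc a b))
    (hφ : ∀ x ∈ Icc a b, HasDerivWithinAt φ (d1 x) (Icc a b) x)
    (hd1 : ∀ x ∈ Icc a b, HasDerivWithinAt d1 (d2 x) (Icc a b) x)
    (hd2 : ∀ x ∈ Icc a b, HasDerivWithinAt d2 (d3 x) (Icc a b) x)
    (hd3 : ∀ x ∈ Icc a b, d3 x = d3 a + ∫ t in a..x, d4 t) (hd4 : IntervalIntegrable d4 volume a b)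
    (hφa : φ a = 0) (hφb : φ b = 0) (hd1a : d1 a = 0) (hd1b : d1 b = 0)
    (heq : ∀ᵐ x ∂(volume.restrict (Ioo a b)),
      d4 x - (α : ℂ) ^ 2 * d2 x
        + Complex.I * (β : ℂ) * (((U x - ν : ℝ) : ℂ) + Complex.I * (μ : ℂ)) *
            (-(d2 x) + (α : ℂ) ^ 2 * φ x)
        + Complex.I * (β : ℂ) * ((U2 x : ℝ) : ℂ) * φ x = f x) :
    ∫ x in a..b, (conj (φ x) * f x).re
      = (∫ x in a..b, ‖d2 x‖ ^ 2) + (α ^ 2 - β * μ) * (∫ x in a..b, ‖d1 x‖ ^ 2)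
        - α ^ 2 * β * μ * (∫ x in a..b, ‖φ x‖ ^ 2)
        - β * ∫ x in a..b, U1 x * (conj (φ x) * d1 x).im := by
  have cU : ContinuousOn U (Icc a b) := fun x hx => (hU x hx).continuousWithinAt
  have cφ : ContinuousOn φ (Icc a b) := fun x hx => (hφ x hx).continuousWithinAt
  have cd2 : ContinuousOn d2 (Icc a b) := fun x hx => (hd2 x hx).continuousWithinAt
  have hpt : ∀ᵐ x, x ∈ uIoc a b → (conj (φ x) * f x).re
      = (conj (φ x) * d4 x).re + (β * μ - α ^ 2) * (conj (φ x) * d2 x).re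
        - α ^ 2 * β * μ * ‖φ x‖ ^ 2 + β * ((U x - ν) * (conj (φ x) * d2 x).im) := by
    rw [uIoc_of_le hab, ← ae_restrict_iff' measurableSet_Ioc,
      ← Measure.restrict_congr_set Ioo_ae_eq_Ioc]
    filter_upwards [heq] with x hx
    rw [← hx, re_conj_mul_orrSommerfeld]
  have i4 : IntervalIntegrable (fun x => (conj (φ x) * d4 x).re) volume a b :=
    (hd4.continuousOn_mul (by rw [uIcc_of_le hab]; fun_prop)).re
  rw [intervalIntegral.integral_congr_ae hpt, intervalIntegral.integral_add,
    intervalIntegral.integral_sub, intervalIntegral.integral_add,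
    intervalIntegral.integral_const_mul, intervalIntegral.integral_const_mul,
    intervalIntegral.integral_const_mul,
    integral_re_conj_mul_fourth_deriv hab hφ hd1 hd2 hd3 hd4 hφa hφb hd1a hd1b,
    integral_re_conj_mul_second_deriv hab hφ hd1 cd2 hφa hφb,
    integral_mul_im_conj_mul_second_deriv hab (fun x hx => (hU x hx).sub_const ν) hU1 hφ hd1 cd2
      hφa hφb]
  · ring
  all_goals
    first
    | exact i4
    | apply_rules [IntervalIntegrable.add, IntervalIntegrable.sub,
        ContinuousOn.intervalIntegrable_of_Icc hab] <;> fun_prop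

section Bounds

variable {a b : ℝ}

theorem integral_re_conj_mul_le {φ f : ℝ → ℂ} (hab : a ≤ b) (hφ : ContinuousOn φ (Icc a b))
    (hf : MemLp f 2 (volume.restrict (Ioc a b))) :
    ∫ x in a..b, (conj (φ x) * f x).re
      ≤ √(∫ x in a..b, ‖φ x‖ ^ 2) * √(∫ x in a..b, ‖f x‖ ^ 2) := by
  have hfi : IntervalIntegrable f volume a b :=
    (intervalIntegrable_iff_integrableOn_Ioc_of_le hab).2 (hf.integrable one_le_two)
  have hφ' : ContinuousOn φ (uIcc a b) := by rwa [uIcc_of_le hab]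
  calc ∫ x in a..b, (conj (φ x) * f x).re ≤ ∫ x in a..b, ‖φ x‖ * ‖f x‖ :=
        intervalIntegral.integral_mono_on hab (hfi.continuousOn_mul (by fun_prop)).re
          (hfi.norm.continuousOn_mul (by fun_prop)) fun x _ =>
            (Complex.re_le_norm _).trans_eq (by rw [norm_mul, Complex.norm_conj])
    _ ≤ _ := intervalIntegral.integral_norm_mul_norm_le hab hφ.memLp_restrict_Ioc hf

theorem abs_integral_mul_im_conj_mul_le {V : ℝ → ℝ} {φ d1 : ℝ → ℂ} {M : ℝ} (hab : a ≤ b)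
    (hV : ContinuousOn V (Icc a b)) (hM : ∀ x ∈ Icc a b, |V x| ≤ M)
    (hφ : ContinuousOn φ (Icc a b)) (hd1 : ContinuousOn d1 (Icc a b)) :
    |∫ x in a..b, V x * (conj (φ x) * d1 x).im|
      ≤ M * (√(∫ x in a..b, ‖φ x‖ ^ 2) * √(∫ x in a..b, ‖d1 x‖ ^ 2)) := by
  have hM0 : 0 ≤ M := (abs_nonneg _).trans (hM a ⟨le_rfl, hab⟩)
  calc |∫ x in a..b, V x * (conj (φ x) * d1 x).im|
      ≤ ∫ x in a..b, |V x * (conj (φ x) * d1 x).im| :=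
        intervalIntegral.abs_integral_le_integral_abs hab
    _ ≤ ∫ x in a..b, M * (‖φ x‖ * ‖d1 x‖) := by
        refine intervalIntegral.integral_mono_on hab
          (ContinuousOn.intervalIntegrable_of_Icc hab (by fun_prop))
          (ContinuousOn.intervalIntegrable_of_Icc hab (by fun_prop)) fun x hx => ?_
        rw [abs_mul]
        refine mul_le_mul (hM x hx) ((Complex.abs_im_le_norm _).trans_eq ?_) (abs_nonneg _) hM0
        rw [norm_mul, Complex.norm_conj]
    _ = M * ∫ x in a..b, ‖φ x‖ * ‖d1 x‖ := intervalIntegral.integral_const_mul _ _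
    _ ≤ _ := mul_le_mul_of_nonneg_left (intervalIntegral.integral_norm_mul_norm_le hab
        hφ.memLp_restrict_Ioc hd1.memLp_restrict_Ioc) hM0

theorem integral_norm_sq_le_of_eq_zero {E : Type*} [NormedAddCommGroup E] [NormedSpace ℝ E]
    [CompleteSpace E] {u u' : ℝ → E} (hab : a ≤ b)
    (hu : ∀ x ∈ Icc a b, HasDerivWithinAt u (u' x) (Icc a b) x) (hu' : ContinuousOn u' (Icc a b))
    (hua : u a = 0) :
    ∫ x in a..b, ‖u x‖ ^ 2 ≤ (b - a) ^ 2 * ∫ x in a..b, ‖u' x‖ ^ 2 := by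
  set J := ∫ x in a..b, ‖u' x‖ ^ 2
  have hJ : 0 ≤ J := intervalIntegral.integral_nonneg hab fun x _ => by positivity
  have hnorm : IntervalIntegrable (fun x => ‖u' x‖) volume a b :=
    ContinuousOn.intervalIntegrable_of_Icc hab (by fun_prop)
  have hpt : ∀ x ∈ Icc a b, ‖u x‖ ^ 2 ≤ (b - a) * J := by
    intro x hx
    have hux : ‖u x‖ ≤ √J * √(b - a) := calc
      ‖u x‖ = ‖∫ t in a..x, u' t‖ := by
        rw [integral_eq_sub_of_hasDerivWithinAt_Icc hu (hu'.intervalIntegrable_of_Icc hab) le_rfl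
          hx.1 hx.2, hua, sub_zero]
      _ ≤ ∫ t in a..x, ‖u' t‖ := intervalIntegral.norm_integral_le_integral_norm hx.1
      _ ≤ ∫ t in a..b, ‖u' t‖ * ‖(1 : ℝ)‖ := by
        simp only [norm_one, mul_one]
        exact intervalIntegral.integral_mono_interval le_rfl hx.1 hx.2
          (.of_forall fun t => norm_nonneg _) hnorm
      _ ≤ √J * √(∫ t in a..b, ‖(1 : ℝ)‖ ^ 2) := intervalIntegral.integral_norm_mul_norm_le hab
          hu'.memLp_restrict_Ioc (memLp_const (1 : ℝ))
      _ = √J * √(b - a) := by simp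
    calc ‖u x‖ ^ 2 ≤ (√J * √(b - a)) ^ 2 := pow_le_pow_left₀ (norm_nonneg _) hux 2
      _ = (b - a) * J := by rw [mul_pow, Real.sq_sqrt hJ, Real.sq_sqrt (sub_nonneg.2 hab), mul_comm]
  calc ∫ x in a..b, ‖u x‖ ^ 2 ≤ ∫ x in a..b, (b - a) * J :=
        intervalIntegral.integral_mono_on hab
          (ContinuousOn.intervalIntegrable_of_Icc hab (by
            have : ContinuousOn u (Icc a b) := fun x hx => (hu x hx).continuousWithinAt
            fun_prop))
          intervalIntegrable_const hpt
    _ = (b - a) ^ 2 * J := by simp only [intervalIntegral.integral_const, smul_eq_mul]; ring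

end Bounds

theorem le_of_energy_identity {I0 I1 I2 E T M α β μ : ℝ} (hI0 : 0 ≤ I0) (hI1 : 0 ≤ I1)
    (hI2 : 0 ≤ I2) (hM : 0 ≤ M) (hβ : 0 < β) (hμ : μ ≤ -2 * (M ^ 2 + 1))
    (hE : E = I2 + (α ^ 2 - β * μ) * I1 - α ^ 2 * β * μ * I0 - β * T)
    (hT : |T| ≤ M * (√I0 * √I1)) (hP : I0 ≤ 4 * I1) :
    I1 + α ^ 2 * I0 ≤ 2 / (β * |μ|) * E := by
  have hμ0 : μ < 0 := by nlinarith
  have hsqrt : √I0 * √I1 ≤ 2 * I1 := calc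
    √I0 * √I1 ≤ √(4 * I1) * √I1 := by gcongr
    _ = 2 * I1 := by
      rw [Real.sqrt_mul (by norm_num), mul_assoc, Real.mul_self_sqrt hI1,
        show (4 : ℝ) = 2 ^ 2 by norm_num, Real.sqrt_sq (by norm_num)]
  have hM4 : 4 * M ≤ -μ := by nlinarith [sq_nonneg (M - 1)]
  have hT' : T ≤ -μ / 2 * I1 := by
    have := (le_abs_self T).trans (hT.trans (mul_le_mul_of_nonneg_left hsqrt hM))
    nlinarith [mul_le_mul_of_nonneg_right hM4 hI1]
  rw [abs_of_neg hμ0, div_mul_eq_mul_div, le_div_iff₀ (by nlinarith)]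
  nlinarith [mul_nonneg (sq_nonneg α) hI1, mul_le_mul_of_nonneg_left hT' hβ.le,
    mul_nonneg (mul_nonneg hβ.le (neg_nonneg.2 hμ0.le)) (mul_nonneg (sq_nonneg α) hI0)]

theorem stmt11_general (U U1 U2 : ℝ → ℝ)
    (hU : ∀ x ∈ Set.Icc (-1:ℝ) 1, HasDerivWithinAt U (U1 x) (Set.Icc (-1:ℝ) 1) x)
    (hU1 : ∀ x ∈ Set.Icc (-1:ℝ) 1, HasDerivWithinAt U1 (U2 x) (Set.Icc (-1:ℝ) 1) x)
    (MU MU1 : ℝ)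
    (hMU : ∀ x ∈ Set.Icc (-1:ℝ) 1, |U x| ≤ MU)
    (hMU1 : ∀ x ∈ Set.Icc (-1:ℝ) 1, |U1 x| ≤ MU1)
    (α β μ ν : ℝ) (hβ : 0 < β)
    (hμ : μ ≤ -2 * (MU1 ^ 2 + MU + 1))
    (φ d1 d2 d3 d4 f : ℝ → ℂ)
    (hd1 : ∀ x ∈ Set.Icc (-1:ℝ) 1, HasDerivWithinAt φ (d1 x) (Set.Icc (-1:ℝ) 1) x)
    (hd2 : ∀ x ∈ Set.Icc (-1:ℝ) 1, HasDerivWithinAt d1 (d2 x) (Set.Icc (-1:ℝ) 1) x)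
    (hd3 : ∀ x ∈ Set.Icc (-1:ℝ) 1, HasDerivWithinAt d2 (d3 x) (Set.Icc (-1:ℝ) 1) x)
    (hd4FTC : ∀ x ∈ Set.Icc (-1:ℝ) 1, d3 x = d3 (-1) + ∫ t in (-1:ℝ)..x, d4 t)
    (hd4i : IntervalIntegrable d4 MeasureTheory.volume (-1) 1)
    (hf : MeasureTheory.MemLp f 2 (MeasureTheory.volume.restrict (Set.Ioo (-1:ℝ) 1)))
    (hbφm : φ (-1) = 0) (hbφp : φ 1 = 0) (hbd1m : d1 (-1) = 0) (hbd1p : d1 1 = 0)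
    (heq : ∀ᵐ x ∂(MeasureTheory.volume.restrict (Set.Ioo (-1:ℝ) 1)),
      d4 x - (α : ℂ) ^ 2 * d2 x
        + Complex.I * (β : ℂ) * (((U x - ν : ℝ) : ℂ) + Complex.I * (μ : ℂ)) *
            (-(d2 x) + (α : ℂ) ^ 2 * φ x)
        + Complex.I * (β : ℂ) * ((U2 x : ℝ) : ℂ) * φ x = f x) :
    (∫ x in (-1:ℝ)..1, ‖d1 x‖ ^ 2) + α ^ 2 * ∫ x in (-1:ℝ)..1, ‖φ x‖ ^ 2
      ≤ (2 / (β * |μ|)) * Real.sqrt (∫ x in (-1:ℝ)..1, ‖φ x‖ ^ 2) *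
          Real.sqrt (∫ x in (-1:ℝ)..1, ‖f x‖ ^ 2) := by
  have hab : (-1 : ℝ) ≤ 1 := by norm_num
  have cφ : ContinuousOn φ (Icc (-1) 1) := fun x hx => (hd1 x hx).continuousWithinAt
  have cd1 : ContinuousOn d1 (Icc (-1) 1) := fun x hx => (hd2 x hx).continuousWithinAt
  have cU1 : ContinuousOn U1 (Icc (-1) 1) := fun x hx => (hU1 x hx).continuousWithinAt
  have hf' : MemLp f 2 (volume.restrict (Ioc (-1) 1)) := by
    rwa [← Measure.restrict_congr_set Ioo_ae_eq_Ioc]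
  have hMU0 : 0 ≤ MU := (abs_nonneg _).trans (hMU 0 (by norm_num))
  have hMU10 : 0 ≤ MU1 := (abs_nonneg _).trans (hMU1 0 (by norm_num))
  have hpoincare : ∫ x in (-1:ℝ)..1, ‖φ x‖ ^ 2 ≤ 4 * ∫ x in (-1:ℝ)..1, ‖d1 x‖ ^ 2 :=
    (integral_norm_sq_le_of_eq_zero hab hd1 cd1 hbφm).trans_eq (by norm_num)
  calc _ ≤ 2 / (β * |μ|) * ∫ x in (-1:ℝ)..1, (conj (φ x) * f x).re :=
        le_of_energy_identity (intervalIntegral.integral_nonneg hab fun x _ => by positivity)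
          (intervalIntegral.integral_nonneg hab fun x _ => by positivity)
          (intervalIntegral.integral_nonneg hab fun x _ => by positivity) hMU10 hβ (by linarith)
          (integral_re_conj_mul_orrSommerfeld hab hU cU1 hd1 hd2 hd3 hd4FTC hd4i
            hbφm hbφp hbd1m hbd1p heq)
          (abs_integral_mul_im_conj_mul_le hab cU1 hMU1 cφ cd1) hpoincare
    _ ≤ _ := by
        rw [mul_assoc]
        exact mul_le_mul_of_nonneg_left (integral_re_conj_mul_le hab cφ hf') (by positivity)

/-- energy estimate for the Orr–Sommerfeld operator in the regime
`Re λ ≪ 0`.  `U` real with derivatives `U1 = U'`, `U2 = U''`, `α ≥ 0`, `β > 0`,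
`λ = μ + iν` with `μ ≤ -2(‖U'‖_∞² + ‖U‖_∞ + 1)`.  `φ ∈ H⁴(-1,1)` with
`φ(±1) = φ'(±1) = 0` satisfies
`(-d²/dx² + iβ(U+iλ))(-φ'' + α²φ) + iβU''φ = f` a.e.; then
`‖φ'‖² + α²‖φ‖² ≤ (2/(β|μ|))‖φ‖_{L²}‖f‖_{L²}`. -/
theorem stmt11 (U U1 U2 : ℝ → ℝ)
    (hU : ∀ x ∈ Set.Icc (-1:ℝ) 1, HasDerivWithinAt U (U1 x) (Set.Icc (-1:ℝ) 1) x)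
    (hU1 : ∀ x ∈ Set.Icc (-1:ℝ) 1, HasDerivWithinAt U1 (U2 x) (Set.Icc (-1:ℝ) 1) x)
    (hU2c : ContinuousOn U2 (Set.Icc (-1:ℝ) 1))
    (MU MU1 : ℝ)
    (hMU : ∀ x ∈ Set.Icc (-1:ℝ) 1, |U x| ≤ MU)
    (hMU1 : ∀ x ∈ Set.Icc (-1:ℝ) 1, |U1 x| ≤ MU1)
    (α β μ ν : ℝ) (hα : 0 ≤ α) (hβ : 0 < β)
    (hμ : μ ≤ -2 * (MU1 ^ 2 + MU + 1))
    (φ d1 d2 d3 d4 f : ℝ → ℂ)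
    (hd1 : ∀ x ∈ Set.Icc (-1:ℝ) 1, HasDerivWithinAt φ (d1 x) (Set.Icc (-1:ℝ) 1) x)
    (hd2 : ∀ x ∈ Set.Icc (-1:ℝ) 1, HasDerivWithinAt d1 (d2 x) (Set.Icc (-1:ℝ) 1) x)
    (hd3 : ∀ x ∈ Set.Icc (-1:ℝ) 1, HasDerivWithinAt d2 (d3 x) (Set.Icc (-1:ℝ) 1) x)
    (hd4FTC : ∀ x ∈ Set.Icc (-1:ℝ) 1, d3 x = d3 (-1) + ∫ t in (-1:ℝ)..x, d4 t)
    (hd4 : MeasureTheory.MemLp d4 2 (MeasureTheory.volume.restrict (Set.Ioo (-1:ℝ) 1)))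
    (hd4i : IntervalIntegrable d4 MeasureTheory.volume (-1) 1)
    (hf : MeasureTheory.MemLp f 2 (MeasureTheory.volume.restrict (Set.Ioo (-1:ℝ) 1)))
    (hbφm : φ (-1) = 0) (hbφp : φ 1 = 0) (hbd1m : d1 (-1) = 0) (hbd1p : d1 1 = 0)
    (heq : ∀ᵐ x ∂(MeasureTheory.volume.restrict (Set.Ioo (-1:ℝ) 1)),
      d4 x - (α : ℂ) ^ 2 * d2 x
        + Complex.I * (β : ℂ) * (((U x - ν : ℝ) : ℂ) + Complex.I * (μ : ℂ)) *
            (-(d2 x) + (α : ℂ) ^ 2 * φ x)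
        + Complex.I * (β : ℂ) * ((U2 x : ℝ) : ℂ) * φ x = f x) :
    (∫ x in (-1:ℝ)..1, ‖d1 x‖ ^ 2) + α ^ 2 * ∫ x in (-1:ℝ)..1, ‖φ x‖ ^ 2
      ≤ (2 / (β * |μ|)) * Real.sqrt (∫ x in (-1:ℝ)..1, ‖φ x‖ ^ 2) *
          Real.sqrt (∫ x in (-1:ℝ)..1, ‖f x‖ ^ 2) :=
  stmt11_general U U1 U2 hU hU1 MU MU1 hMU hMU1 α β μ ν hβ hμ φ d1 d2 d3 d4 f hd1 hd2 hd3 hd4FTC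
    hd4i hf hbφm hbφp hbd1m hbd1p heq
end
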